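/- arXiv:2508.17091 — 3 statements merged into one kernel-verified Lean document; each statement's English description precedes it below -/
import Mathlib

section
/- Let 𝒞 = {C_i, C_i′}_{i∈ℕ} be an admissible configuration of Jordan curves in Ĉ and let G = ⟨g_i : i ∈ ℕ⟩ ≤ Möb with g_i(Ext(C_i)) = Int(C_i′) for every i. If the topological interior Ext(𝒞)° of the common exterior is non-empty, then G is discrete (hence a Schottky-like group with respect to 𝒞). Moreover, if all curves of 𝒞 are circles, then G is discrete even without assuming Ext(𝒞)° ≠ ∅ (hence a classical Schottky-like group with respect to 𝒞). (Proposition 2.1 (3),(4)) -/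
open Filter Topology Set

noncomputable section

/-! ### The Riemann sphere, the chordal (spherical) metric, and Möbius transformations -/

abbrev RSphere : Type := OnePoint ℂ

namespace SchottkyPaper

/-- The chordal (spherical) distance on the Riemann sphere `ℂ ∪ {∞}`. -/
def chordal : RSphere → RSphere → ℝ := fun x y =>
  Option.elim x
    (Option.elim y 0 fun w => 2 / Real.sqrt (1 + ‖w‖ ^ 2))
    (fun z => Option.elim y
      (2 / Real.sqrt (1 + ‖z‖ ^ 2))
      (fun w => 2 * ‖z - w‖ /
        (Real.sqrt (1 + ‖z‖ ^ 2) * Real.sqrt (1 + ‖w‖ ^ 2))))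

/-- The Möbius transformation `z ↦ (az+b)/(cz+d)` as a self-map of the Riemann sphere. -/
def mobiusFun (a b c d : ℂ) : RSphere → RSphere := fun x =>
  Option.elim x (if c = 0 then (OnePoint.infty : RSphere) else ((a / c : ℂ) : RSphere))
    (fun z => if c * z + d = 0 then (OnePoint.infty : RSphere)
      else (((a * z + b) / (c * z + d) : ℂ) : RSphere))

/-- A permutation of the Riemann sphere is a Möbius transformation if it is given by
`z ↦ (az+b)/(cz+d)` with `ad - bc ≠ 0`.  `Möb` is then the set of all permutations of the
sphere satisfying this predicate (a subgroup of the permutation group of the sphere). -/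
def IsMobiusPerm (f : Equiv.Perm RSphere) : Prop :=
  ∃ a b c d : ℂ, a * d - b * c ≠ 0 ∧ ∀ x, f x = mobiusFun a b c d x

/-- A Möbius transformation with real coefficients and positive determinant,
i.e. an element of `PSL(2, ℝ)` (a Fuchsian transformation). -/
def IsRealMobius (f : Equiv.Perm RSphere) : Prop :=
  ∃ a b c d : ℝ, 0 < a * d - b * c ∧ ∀ x, f x = mobiusFun (a : ℂ) (b : ℂ) (c : ℂ) (d : ℂ) x

/-- A loxodromic Möbius transformation: conjugate (within Möb) to `z ↦ λ z` with
`|λ| ∉ {0, 1}`. -/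
def IsLoxodromic (f : Equiv.Perm RSphere) : Prop :=
  ∃ h : Equiv.Perm RSphere, IsMobiusPerm h ∧
    ∃ lam : ℂ, lam ≠ 0 ∧ ‖lam‖ ≠ 1 ∧
      ∀ x, (h * f * h⁻¹) x = mobiusFun lam 0 0 1 x

/-! ### Circles and Jordan curves on the sphere -/

/-- The unit circle (as a topological space). -/
abbrev S1 : Type := {z : ℂ // ‖z‖ = 1}

def s1one : S1 := ⟨1, by simp⟩

/-- The Euclidean line in `ℂ` through two points. -/
def lineThrough (a b : ℂ) : Set ℂ := {z | ∃ t : ℝ, z = a + t • (b - a)}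

/-- A Euclidean circle in `ℂ ⊂ Ĉ`. -/
def circleSet (a : ℂ) (r : ℝ) : Set RSphere :=
  {w | ∃ u : ℂ, w = (u : RSphere) ∧ ‖u - a‖ = r}

/-- A line together with `∞`: a "circle through infinity" on the sphere. -/
def lineSet (a b : ℂ) : Set RSphere :=
  insert (OnePoint.infty : RSphere) ((fun u : ℂ => (u : RSphere)) '' lineThrough a b)

/-- A (round) circle on the Riemann sphere. -/
def IsCircle (C : Set RSphere) : Prop :=
  (∃ a : ℂ, ∃ r : ℝ, 0 < r ∧ C = circleSet a r) ∨ (∃ a b : ℂ, a ≠ b ∧ C = lineSet a b)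

/-- A Jordan curve on the Riemann sphere: the homeomorphic image of the unit circle. -/
def IsJordanCurve (C : Set RSphere) : Prop :=
  ∃ f : S1 → RSphere, Continuous f ∧ Function.Injective f ∧ Set.range f = C

/-! ### Admissible configurations -/

/-- An admissible configuration `𝒞 = {C i, C' i}` of Jordan curves on the sphere:
pairwise disjoint Jordan curves, a point `z0` from which no curve of the family separates
another curve of the family, and no point of one curve is a limit of points from
the other curves. -/
structure AdmissibleConfig (ι : Type) where
  z0 : RSphere
  C : ι → Set RSphere
  C' : ι → Set RSphere
  jordanC : ∀ i, IsJordanCurve (C i)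
  jordanC' : ∀ i, IsJordanCurve (C' i)
  disj : ∀ j k : ι ⊕ ι, j ≠ k → Disjoint (Sum.elim C C' j) (Sum.elim C C' k)
  z0_off : ∀ j : ι ⊕ ι, z0 ∉ Sum.elim C C' j
  not_separating : ∀ j k : ι ⊕ ι, j ≠ k →
    Sum.elim C C' k ⊆ connectedComponentIn (Sum.elim C C' j)ᶜ z0
  not_limit : ∀ j : ι ⊕ ι, ∀ x ∈ Sum.elim C C' j,
    x ∉ closure (⋃ k ∈ {k : ι ⊕ ι | k ≠ j}, Sum.elim C C' k)

namespace AdmissibleConfig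

variable {ι : Type} (cfg : AdmissibleConfig ι)

/-- The family of all curves of the configuration (indexed by `ι ⊕ ι`). -/
def curve : ι ⊕ ι → Set RSphere := Sum.elim cfg.C cfg.C'

/-- The exterior of a curve: the connected component of the complement containing `z0`. -/
def Ext (C : Set RSphere) : Set RSphere := connectedComponentIn Cᶜ cfg.z0

/-- The interior of a curve: the rest of the complement. -/
def Intr (C : Set RSphere) : Set RSphere := Cᶜ \ cfg.Ext C

/-- The common exterior `Ext(𝒞)` of all curves of the configuration. -/
def extC : Set RSphere := ⋂ j : ι ⊕ ι, cfg.Ext (cfg.curve j)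

/-- All curves of the configuration are round circles. -/
def IsClassicalConfig : Prop := ∀ j : ι ⊕ ι, IsCircle (cfg.curve j)

/-- The accumulation set `Λ'` of the configuration curves: points that are limits of
sequences of points taken from infinitely many distinct curves. -/
def accSet : Set RSphere :=
  {x | ∃ (j : ℕ → ι ⊕ ι) (p : ℕ → RSphere), Function.Injective j ∧
        (∀ n, p n ∈ cfg.curve (j n)) ∧ Tendsto p atTop (nhds x)}

end AdmissibleConfig

/-- Hausdorff convergence of a sequence of sets on the sphere to a single point. -/
def curvesTendTo (A : ℕ → Set RSphere) (x : RSphere) : Prop :=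
  ∀ ε : ℝ, 0 < ε → ∀ᶠ n in atTop, ∀ y ∈ A n, chordal y x < ε

/-- Condition (∗): for any subsequence, if `C (i k) → x` then `C' (i k) → x`. -/
def starCondition {ι : Type} (cfg : AdmissibleConfig ι) : Prop :=
  ∀ φ : ℕ → ι, Function.Injective φ → ∀ x : RSphere,
    curvesTendTo (fun k => cfg.C (φ k)) x → curvesTendTo (fun k => cfg.C' (φ k)) x

/-! ### Kleinian group notions -/

/-- The limit set of a subgroup of the sphere's permutation group: accumulation points
of orbits. -/
def limitSet (G : Subgroup (Equiv.Perm RSphere)) : Set RSphere :=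
  {x | ∃ z : RSphere, ∃ u : ℕ → G, Function.Injective u ∧
        Tendsto (fun n => (u n : Equiv.Perm RSphere) z) atTop (nhds x)}

/-- The region of discontinuity `Ω(G)`. -/
def region (G : Subgroup (Equiv.Perm RSphere)) : Set RSphere := (limitSet G)ᶜ

/-- Discreteness: any sequence of elements of `G` converging pointwise to the identity is
eventually the identity. -/
def IsDiscreteSubgroup (G : Subgroup (Equiv.Perm RSphere)) : Prop :=
  ∀ u : ℕ → G,
    (∀ z : RSphere, Tendsto (fun n => (u n : Equiv.Perm RSphere) z) atTop (nhds z)) →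
    ∀ᶠ n in atTop, (u n : Equiv.Perm RSphere) = 1

/-- An open set `F ⊆ Ω(G)` is a fundamental domain if every point of `Ω(G)` is equivalent to a
point of the closure of `F` and no two points of `F` are equivalent under `G`. -/
def IsFundamentalDomain (G : Subgroup (Equiv.Perm RSphere)) (F : Set RSphere) : Prop :=
  IsOpen F ∧ F ⊆ region G ∧
    (∀ z ∈ region G, ∃ f ∈ G, (f : Equiv.Perm RSphere) z ∈ closure F) ∧
    (∀ x ∈ F, ∀ y ∈ F, (∃ f ∈ G, (f : Equiv.Perm RSphere) x = y) → x = y)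

/-! ### Schottky data -/

/-- The data of a Schottky-like group: an admissible configuration together with Möbius
transformations pairing the curves, `g i (Ext (C i)) = Int (C' i)`. -/
structure SchottkyData (ι : Type) where
  cfg : AdmissibleConfig ι
  g : ι → Equiv.Perm RSphere
  mob : ∀ i, IsMobiusPerm (g i)
  pairing : ∀ i, (g i) '' (cfg.Ext (cfg.C i)) = cfg.Intr (cfg.C' i)

namespace SchottkyData

variable {ι : Type} (S : SchottkyData ι)

/-- The group generated by the pairing transformations. -/
def G : Subgroup (Equiv.Perm RSphere) := Subgroup.closure (Set.range S.g)

/-- `S` is (the data of) a Schottky-like group: the generated group is discrete. -/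
def IsSchottkyLike : Prop := IsDiscreteSubgroup S.G

/-- All configuration curves are circles. -/
def IsClassical : Prop := S.cfg.IsClassicalConfig

/-- `S` is (the data of) a Schottky group: discrete, the interior of the common exterior is a
fundamental domain, and the limit set is totally disconnected. -/
def IsSchottky : Prop :=
  IsDiscreteSubgroup S.G ∧ IsFundamentalDomain S.G (interior S.cfg.extC) ∧
    IsTotallyDisconnected (limitSet S.G)

/-- A `G`-translate of a configuration curve. -/
def IsTranslate (A : Set RSphere) : Prop :=
  ∃ f ∈ S.G, ∃ j : ι ⊕ ι, A = (f : Equiv.Perm RSphere) '' (S.cfg.curve j)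

end SchottkyData

/-! ### Nested sequences of translated curves -/

/-- `C` separates `A` from `B`: they lie in different connected components of `Cᶜ`. -/
def Separates (C A B : Set RSphere) : Prop :=
  A ⊆ Cᶜ ∧ B ⊆ Cᶜ ∧ ∀ a ∈ A, ∀ b ∈ B, b ∉ connectedComponentIn Cᶜ a

/-- A nested sequence of `G`-translates of configuration curves. -/
def SchottkyData.IsNestedSeq {ι : Type} (S : SchottkyData ι) (A : ℕ → Set RSphere) : Prop :=
  (∀ n, S.IsTranslate (A n)) ∧ ∀ n, Separates (A (n + 1)) (A n) (A (n + 2))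

/-- A nested sequence is maximal if no translate of a configuration curve lies between
consecutive members. -/
def SchottkyData.IsMaximalNested {ι : Type} (S : SchottkyData ι) (A : ℕ → Set RSphere) : Prop :=
  ∀ n, ¬ ∃ B : Set RSphere, S.IsTranslate B ∧ B ≠ A n ∧ B ≠ A (n + 1) ∧
    Separates B (A n) (A (n + 1))

/-- Two sequences of curves are equivalent if they differ only in finitely many terms,
i.e. suitable tails agree. -/
def tailEquiv (A B : ℕ → Set RSphere) : Prop := ∃ a b : ℕ, ∀ n, A (a + n) = B (b + n)

/-! ### The Cayley graph of the free group: geodesic rays -/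

/-- Word length with respect to the symmetric generating set `{g i, (g i)⁻¹}`. -/
def wordLen {ι : Type} (g : ι → Equiv.Perm RSphere) (f : Equiv.Perm RSphere) : ℕ :=
  sInf {n | ∃ l : List (Equiv.Perm RSphere), l.length = n ∧
        (∀ x ∈ l, ∃ i, x = g i ∨ x = (g i)⁻¹) ∧ l.prod = f}

/-- A geodesic ray in the Cayley graph `Γ_S(G)` with respect to the symmetric generating
set `S = {g i ± 1}`: a sequence of vertices, consecutive ones joined by an edge, whose
word-metric distances realize the parameter differences. -/
def IsGeodesicRay {ι : Type} (g : ι → Equiv.Perm RSphere) (v : ℕ → Equiv.Perm RSphere) : Prop :=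
  v 0 ∈ Subgroup.closure (Set.range g) ∧
  (∀ n, ∃ i, v (n + 1) = v n * g i ∨ v (n + 1) = v n * (g i)⁻¹) ∧
  ∀ m n : ℕ, m ≤ n → wordLen g ((v m)⁻¹ * v n) = n - m

/-- Two geodesic rays are asymptotic if they eventually follow the same path. -/
def raysAsymptotic (v w : ℕ → Equiv.Perm RSphere) : Prop :=
  ∃ a b : ℕ, ∀ n, v (a + n) = w (b + n)

/-! ### Spherical diameter and hyperbolic 3-space -/

/-- The spherical diameter of a subset of the Riemann sphere. -/
def sphDiam (A : Set RSphere) : ℝ := sSup {t | ∃ x ∈ A, ∃ y ∈ A, t = chordal x y}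

def arcosh (x : ℝ) : ℝ := Real.log (x + Real.sqrt (x ^ 2 - 1))

/-- The hyperbolic distance in the upper half-space model of `ℍ³` (points `(z, t)`, `t > 0`). -/
def hypDist3 (p q : ℂ × ℝ) : ℝ :=
  arcosh (1 + (‖p.1 - q.1‖ ^ 2 + (p.2 - q.2) ^ 2) / (2 * p.2 * q.2))

/-- The totally geodesic plane in `ℍ³` spanned by a circle on the sphere at infinity. -/
def spanningPlane (C : Set RSphere) : Set (ℂ × ℝ) :=
  {p | 0 < p.2 ∧
    ((∃ a : ℂ, ∃ r : ℝ, 0 < r ∧ C = circleSet a r ∧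
        ‖p.1 - a‖ ^ 2 + p.2 ^ 2 = r ^ 2) ∨
      (∃ a b : ℂ, a ≠ b ∧ C = lineSet a b ∧ p.1 ∈ lineThrough a b))}

/-! ### Quotient surfaces and quotient 3-manifolds -/

/-- The quotient `Ω(G)/G` of the region of discontinuity. -/
def regionQuot (G : Subgroup (Equiv.Perm RSphere)) : Type :=
  Quot (fun x y : region G => ∃ f ∈ G, (f : Equiv.Perm RSphere) (x : RSphere) = (y : RSphere))

instance (G : Subgroup (Equiv.Perm RSphere)) : TopologicalSpace (regionQuot G) :=
  TopologicalSpace.coinduced (Quot.mk _) inferInstance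

/-- The projection of a subset of the sphere to `Ω(G)/G`. -/
def projSet (G : Subgroup (Equiv.Perm RSphere)) (A : Set RSphere) : Set (regionQuot G) :=
  {q | ∃ x : region G, (x : RSphere) ∈ A ∧ Quot.mk _ x = q}

/-- The distance function induced on a quotient by a distance function upstairs. -/
def quotDistFun {α : Type} (d : α → α → ℝ) {r : α → α → Prop} (q1 q2 : Quot r) : ℝ :=
  sInf {t | ∃ x y : α, Quot.mk r x = q1 ∧ Quot.mk r y = q2 ∧ t = d x y}

/-- The spherical (chordal) distance function induced on `Ω(G)/G`. -/
def quotChordal (G : Subgroup (Equiv.Perm RSphere)) : regionQuot G → regionQuot G → ℝ :=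
  quotDistFun (fun x y : region G => chordal (x : RSphere) (y : RSphere))

/-! ### Hyperbolic 3-space quotient `(ℍ³ ∪ Ω(G))/G` -/

abbrev HSpace : Type := OnePoint (ℂ × ℝ)

/-- The sphere at infinity embedded as the boundary `t = 0` of the closed half-space. -/
def bdryPt : RSphere → HSpace := Option.map (fun z : ℂ => (z, (0 : ℝ)))

def cq (z : ℂ) : Quaternion ℝ := ⟨z.re, z.im, 0, 0⟩
def pq (p : ℂ × ℝ) : Quaternion ℝ := ⟨p.1.re, p.1.im, p.2, 0⟩

/-- The Poincaré extension of a Möbius transformation to upper half-space, via quaternions: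
`P ↦ (aP + b)(cP + d)⁻¹`. -/
def poincare (a b c d : ℂ) (p : ℂ × ℝ) : ℂ × ℝ :=
  let q := (cq a * pq p + cq b) * (cq c * pq p + cq d)⁻¹
  (⟨q.re, q.imI⟩, q.imJ)

open Classical in
/-- Some choice of matrix coefficients for a Möbius permutation. -/
def mobCoeff (f : Equiv.Perm RSphere) : ℂ × ℂ × ℂ × ℂ :=
  if h : ∃ m : ℂ × ℂ × ℂ × ℂ, m.1 * m.2.2.2 - m.2.1 * m.2.2.1 ≠ 0 ∧
      ∀ x, f x = mobiusFun m.1 m.2.1 m.2.2.1 m.2.2.2 x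
    then h.choose else (1, 0, 0, 1)

/-- The extension of a Möbius transformation to `ℍ³ ∪ Ĉ` (as a self-map of the one-point
compactification of `ℂ × ℝ`): the Poincaré extension on the interior and the boundary action
on the sphere at infinity. -/
def extAction (f : Equiv.Perm RSphere) : HSpace → HSpace := fun x =>
  Option.elim x (bdryPt (f (OnePoint.infty : RSphere)))
    (fun p => if p.2 = 0 then bdryPt (f ((p.1 : ℂ) : RSphere))
      else Option.some (poincare (mobCoeff f).1 (mobCoeff f).2.1 (mobCoeff f).2.2.1
        (mobCoeff f).2.2.2 p))

/-- The subset `ℍ³ ∪ Ω(G)` of the closed half-space (plus the point at infinity). -/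
def kleinSet (G : Subgroup (Equiv.Perm RSphere)) : Set HSpace :=
  {x | (∃ p : ℂ × ℝ, x = Option.some p ∧ 0 < p.2) ∨ (∃ z ∈ region G, x = bdryPt z)}

/-- The quotient 3-manifold-with-boundary `(ℍ³ ∪ Ω(G))/G`. -/
def kleinQuot (G : Subgroup (Equiv.Perm RSphere)) : Type :=
  Quot (fun x y : kleinSet G => ∃ f ∈ G, extAction f (x : HSpace) = (y : HSpace))

instance (G : Subgroup (Equiv.Perm RSphere)) : TopologicalSpace (kleinQuot G) :=
  TopologicalSpace.coinduced (Quot.mk _) inferInstance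

/-! ### Ends of topological spaces -/

/-- Compatibility conditions defining an end: a consistent choice, for every compact set,
of a connected component of its complement. -/
def endsCompat {X : Type} [TopologicalSpace X]
    (e : TopologicalSpace.Compacts X → Set X) : Prop :=
  (∀ K : TopologicalSpace.Compacts X,
    ∃ x ∈ (K : Set X)ᶜ, e K = connectedComponentIn (K : Set X)ᶜ x) ∧
  (∀ K K' : TopologicalSpace.Compacts X, (K : Set X) ⊆ (K' : Set X) → e K' ⊆ e K)

/-- The space of ends (the remainder of the Freudenthal compactification). -/
def EndsSpace (X : Type) [TopologicalSpace X] : Type :=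
  {e : TopologicalSpace.Compacts X → Set X // endsCompat e}

instance {X : Type} [TopologicalSpace X] : TopologicalSpace (EndsSpace X) :=
  TopologicalSpace.generateFrom
    {s | ∃ (K : TopologicalSpace.Compacts X) (U : Set X), s = {e : EndsSpace X | e.1 K = U}}

/-- A planar end: some complementary-component neighborhood of the end embeds in the plane. -/
def IsPlanarEnd {X : Type} [TopologicalSpace X] (e : EndsSpace X) : Prop :=
  ∃ K : TopologicalSpace.Compacts X, ∃ f : ↥(e.1 K) → ℂ, Topology.IsEmbedding f

/-! ### Handlebodies -/

abbrev Ball3 : Type := {x : EuclideanSpace ℝ (Fin 3) // x ∈ Metric.closedBall 0 1}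
abbrev Disc2 : Type := {z : ℂ // ‖z‖ ≤ 1}
abbrev SolidTorus : Type := S1 × Disc2

/-- Index type for handles of a handlebody of genus `g` (`0 ≤ g ≤ ∞`). -/
abbrev GenusIdx (g : ℕ∞) : Type := {n : ℕ // (n : ℕ∞) < g}

/-- Data describing a handlebody of genus `g`: solid tori attached to the closed 3-ball
along pairwise disjoint closed discs in the boundary sphere, whose accumulation set is
totally disconnected and avoids the discs. -/
structure HandlebodyData (g : ℕ∞) where
  ψ : GenusIdx g → Disc2 → Ball3
  χ : GenusIdx g → Disc2 → SolidTorus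
  ψ_cont : ∀ i, Continuous (ψ i)
  ψ_inj : ∀ i, Function.Injective (ψ i)
  ψ_bdry : ∀ i d, ‖(ψ i d).1‖ = 1
  ψ_disj : ∀ i j, i ≠ j → Disjoint (Set.range (ψ i)) (Set.range (ψ j))
  χ_cont : ∀ i, Continuous (χ i)
  χ_inj : ∀ i, Function.Injective (χ i)
  χ_bdry : ∀ i d, ‖((χ i d).2 : ℂ)‖ = 1
  acc_totdisc : IsTotallyDisconnected
    {x : Ball3 | ∀ U ∈ nhds x, {i | (Set.range (ψ i) ∩ U).Nonempty}.Infinite}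
  acc_disj : ∀ i, Disjoint (Set.range (ψ i))
    {x : Ball3 | ∀ U ∈ nhds x, {j | (Set.range (ψ j) ∩ U).Nonempty}.Infinite}

/-- The gluing relation of the disc sum: each attaching disc in the ball boundary is
identified with a disc in the boundary of the corresponding solid torus. -/
def HandlebodyData.rel {g : ℕ∞} (H : HandlebodyData g) :
    (Ball3 ⊕ (Σ _ : GenusIdx g, SolidTorus)) → (Ball3 ⊕ (Σ _ : GenusIdx g, SolidTorus)) → Prop :=
  fun x y => ∃ i d, x = Sum.inl (H.ψ i d) ∧ y = Sum.inr ⟨i, H.χ i d⟩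

/-- The disc sum `B³ ∪ ⋃ Tᵢ`. -/
def HandlebodyData.space {g : ℕ∞} (H : HandlebodyData g) : Type := Quot H.rel

instance {g : ℕ∞} (H : HandlebodyData g) : TopologicalSpace H.space :=
  TopologicalSpace.coinduced (Quot.mk _) inferInstance

/-- A handlebody of genus `g` (`0 ≤ g ≤ ∞`). -/
def IsHandlebody (M : Type) [TopologicalSpace M] (g : ℕ∞) : Prop :=
  ∃ H : HandlebodyData g, Nonempty (M ≃ₜ H.space)

/-! ### Surfaces: genus, orientability, planar ends -/

/-- `R` is a surface: a connected, Hausdorff, second countable, locally planar space. -/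
def IsSurface (R : Type) [TopologicalSpace R] : Prop :=
  T2Space R ∧ SecondCountableTopology R ∧ ConnectedSpace R ∧
    ∀ x : R, ∃ U : Set R, IsOpen U ∧ x ∈ U ∧ ∃ V : Set ℂ, IsOpen V ∧ Nonempty (↥U ≃ₜ ↥V)

/-- The open Möbius band. -/
def MobiusBand : Type := Quot (fun p q : ℝ × ℝ => q = (p.1 + 1, -p.2))

instance : TopologicalSpace MobiusBand :=
  TopologicalSpace.coinduced (Quot.mk _) inferInstance

/-- Orientability of a surface: it contains no embedded Möbius band. -/
def Orientable (R : Type) [TopologicalSpace R] : Prop :=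
  ¬ ∃ A : Set R, Nonempty (↥A ≃ₜ MobiusBand)

/-- The once-punctured torus. -/
abbrev PuncturedTorus : Type := {p : S1 × S1 // p ≠ (s1one, s1one)}

/-- Infinite genus: the space contains infinitely many pairwise disjoint embedded
once-punctured tori. -/
def InfiniteGenus (X : Type) [TopologicalSpace X] : Prop :=
  ∃ T : ℕ → Set X, (∀ i j, i ≠ j → Disjoint (T i) (T j)) ∧
    ∀ n, Nonempty (↥(T n) ≃ₜ PuncturedTorus)

/-! ### Quasiconformal and conformal homeomorphisms (metric definition) -/

/-- The circular dilatation at a point of a map between spaces equipped with distance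
functions. -/
def circDilat {X Y : Type} (dX : X → X → ℝ) (dY : Y → Y → ℝ) (f : X → Y) (x : X) : ℝ :=
  Filter.limsup (fun r : ℝ =>
      sSup {t | ∃ y, dX x y ≤ r ∧ t = dY (f x) (f y)} /
        sInf {t | ∃ y, r ≤ dX x y ∧ t = dY (f x) (f y)})
    (nhdsWithin (0 : ℝ) (Set.Ioi (0 : ℝ)))

/-- A `K`-quasiconformal homeomorphism between spaces carrying conformal distance
functions. -/
def IsQCHomeo {X Y : Type} [TopologicalSpace X] [TopologicalSpace Y]
    (dX : X → X → ℝ) (dY : Y → Y → ℝ) (K : ℝ) (f : X → Y) : Prop :=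
  IsHomeomorph f ∧ ∀ x, circDilat dX dY f x ≤ K

/-- Quasiconformal equivalence. -/
def QCEquivalent {X Y : Type} [TopologicalSpace X] [TopologicalSpace Y]
    (dX : X → X → ℝ) (dY : Y → Y → ℝ) : Prop :=
  ∃ K : ℝ, 1 ≤ K ∧ ∃ f : X → Y, IsQCHomeo dX dY K f

/-- A conformal homeomorphism is a `1`-quasiconformal homeomorphism. -/
def IsConformalHomeo {X Y : Type} [TopologicalSpace X] [TopologicalSpace Y]
    (dX : X → X → ℝ) (dY : Y → Y → ℝ) (f : X → Y) : Prop :=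
  IsQCHomeo dX dY 1 f

/-! ### Fuchsian groups, hyperbolic surfaces, pants decompositions -/

/-- Discreteness of a subgroup of `SL(2, ℝ)`. -/
def FuchsianDiscrete (Γ : Subgroup (Matrix.SpecialLinearGroup (Fin 2) ℝ)) : Prop :=
  ∀ u : ℕ → Γ,
    Tendsto (fun n => ((u n : Matrix.SpecialLinearGroup (Fin 2) ℝ) : Matrix (Fin 2) (Fin 2) ℝ))
      atTop (nhds (1 : Matrix (Fin 2) (Fin 2) ℝ)) →
    ∀ᶠ n in atTop, (u n : Matrix.SpecialLinearGroup (Fin 2) ℝ) = 1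

/-- The action of `Γ ≤ SL(2, ℝ)` on the upper half-plane is free (torsion-free Fuchsian
group). -/
def FuchsianFree (Γ : Subgroup (Matrix.SpecialLinearGroup (Fin 2) ℝ)) : Prop :=
  ∀ γ ∈ Γ, γ ≠ 1 → ∀ z : UpperHalfPlane, γ • z ≠ z

/-- The quotient hyperbolic surface `ℍ/Γ`. -/
def fquot (Γ : Subgroup (Matrix.SpecialLinearGroup (Fin 2) ℝ)) : Type :=
  Quot (fun z w : UpperHalfPlane => ∃ γ ∈ Γ, γ • z = w)

instance (Γ : Subgroup (Matrix.SpecialLinearGroup (Fin 2) ℝ)) : TopologicalSpace (fquot Γ) :=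
  TopologicalSpace.coinduced (Quot.mk _) inferInstance

/-- The hyperbolic distance function induced on `ℍ/Γ`. -/
def fquotDist (Γ : Subgroup (Matrix.SpecialLinearGroup (Fin 2) ℝ)) :
    fquot Γ → fquot Γ → ℝ :=
  quotDistFun (fun z w : UpperHalfPlane => dist z w)

/-- The translation length of an isometry of the hyperbolic plane. -/
def transLen (γ : Matrix.SpecialLinearGroup (Fin 2) ℝ) : ℝ :=
  ⨅ z : UpperHalfPlane, dist z (γ • z)

/-- The axis of a hyperbolic isometry. -/
def axisSet (γ : Matrix.SpecialLinearGroup (Fin 2) ℝ) : Set UpperHalfPlane :=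
  {z | dist z (γ • z) = transLen γ}

/-- `c` is a simple closed geodesic of length at most `L` on `ℍ/Γ`. -/
def IsSimpleClosedGeodesic (Γ : Subgroup (Matrix.SpecialLinearGroup (Fin 2) ℝ))
    (c : Set (fquot Γ)) (L : ℝ) : Prop :=
  ∃ γ ∈ Γ, γ ≠ 1 ∧ 0 < transLen γ ∧ transLen γ ≤ L ∧
    c = (fun z => (Quot.mk _ z : fquot Γ)) '' axisSet γ ∧ Nonempty (↥c ≃ₜ S1)

/-- A model (open) pair of pants: a triply connected plane domain. -/
def PantsModel : Set ℂ := Metric.ball 0 4 \ (Metric.closedBall 2 1 ∪ Metric.closedBall (-2) 1)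

/-- `ℍ/Γ` admits a bounded pants decomposition: a family of pairwise disjoint simple closed
geodesics of uniformly bounded lengths cutting the surface into pairs of pants. -/
def HasBoundedPantsDecomp (Γ : Subgroup (Matrix.SpecialLinearGroup (Fin 2) ℝ)) : Prop :=
  ∃ (L : ℝ) (J : Type) (c : J → Set (fquot Γ)),
    (∀ j, IsSimpleClosedGeodesic Γ (c j) L) ∧
    (∀ j k, j ≠ k → Disjoint (c j) (c k)) ∧
    ∀ x : fquot Γ, x ∉ ⋃ j, c j →
      Nonempty (↥(connectedComponentIn (⋃ j, c j)ᶜ x) ≃ₜ ↥PantsModel)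

/-- `Ω(G)/G` has a bounded pants decomposition (with respect to its hyperbolic metric):
it is conformally the quotient of a Fuchsian group admitting one. -/
def SchottkyData.HasBPD {ι : Type} (S : SchottkyData ι) : Prop :=
  ∃ Γ : Subgroup (Matrix.SpecialLinearGroup (Fin 2) ℝ),
    FuchsianDiscrete Γ ∧ FuchsianFree Γ ∧ HasBoundedPantsDecomp Γ ∧
    ∃ u : fquot Γ → regionQuot S.G,
      IsConformalHomeo (fquotDist Γ) (quotChordal S.G) u

/-- The image of a point of the upper half-plane on the Riemann sphere. -/
def toSphere (z : UpperHalfPlane) : RSphere := ((z : ℂ) : RSphere)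

/-- The limit set on the boundary circle `ℝ ∪ {∞}` of a Fuchsian group. -/
def fuchsLimitSet (Γ : Subgroup (Matrix.SpecialLinearGroup (Fin 2) ℝ)) : Set RSphere :=
  {x | ∃ z : UpperHalfPlane, ∃ u : ℕ → Γ, Function.Injective u ∧
        Tendsto (fun n => toSphere ((u n : Matrix.SpecialLinearGroup (Fin 2) ℝ) • z))
          atTop (nhds x)}

/-- The boundary circle `ℝ ∪ {∞}` of the upper half-plane, inside the Riemann sphere. -/
def realCircle : Set RSphere :=
  {x | x = (OnePoint.infty : RSphere) ∨ ∃ r : ℝ, x = ((r : ℂ) : RSphere)}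

/-! ### Plane domains: moduli of annuli, the Grötzsch modulus -/

/-- A Jordan curve in the plane. -/
def IsJordanCurvePlane (J : Set ℂ) : Prop :=
  ∃ f : S1 → ℂ, Continuous f ∧ Function.Injective f ∧ Set.range f = J

/-- The union of the bounded complementary components of a plane set. -/
def insideJ (J : Set ℂ) : Set ℂ :=
  {z | z ∉ J ∧ Bornology.IsBounded (connectedComponentIn Jᶜ z)}

/-- The round annulus `{r < |z - a| < R}`. -/
def planeAnnulus (a : ℂ) (r R : ℝ) : Set ℂ :=
  {z | r < ‖z - a‖ ∧ ‖z - a‖ < R}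

/-- Conformal equivalence of plane domains. -/
def ConfEquiv (U V : Set ℂ) : Prop :=
  ∃ f : ℂ → ℂ, DifferentiableOn ℂ f U ∧ Set.InjOn f U ∧ f '' U = V

/-- `W` is a doubly connected domain of conformal modulus `m`. -/
def HasModulus (W : Set ℂ) (m : ℝ) : Prop :=
  0 < m ∧ ConfEquiv W (planeAnnulus 0 1 (Real.exp m))

/-- `μ r = m`: the Grötzsch extremal domain `Δ ∖ [0, r]` has modulus `m`. -/
def GrotzschMod (r m : ℝ) : Prop :=
  HasModulus (Metric.ball (0 : ℂ) 1 \ segment ℝ (0 : ℂ) ((r : ℝ) : ℂ)) m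

/-! ### Surfaces with conformal structure (metric formulation) and S-type -/

/-- A surface with a conformal structure, encoded by a compatible conformal metric:
a connected Hausdorff space with a metric inducing the topology, locally `1`-quasiconformally
equivalent to plane domains. -/
structure ConfSurface where
  X : Type
  [t : TopologicalSpace X]
  d : X → X → ℝ
  d_self : ∀ x, d x x = 0
  d_symm : ∀ x y, d x y = d y x
  d_pos : ∀ x y, x ≠ y → 0 < d x y
  d_tri : ∀ x y z, d x z ≤ d x y + d y z
  t_eq : t = TopologicalSpace.generateFrom {s | ∃ (x : X) (ε : ℝ), s = {y | d x y < ε}}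
  conn : ConnectedSpace X
  t2 : T2Space X
  charts : ∀ x : X, ∃ (U : Set X) (φ : ↥U → ℂ), x ∈ U ∧ IsOpen U ∧
    IsOpen (Set.range φ) ∧
    IsQCHomeo (fun a b : ↥U => d a.1 b.1)
      (fun z w : ↥(Set.range φ) => dist (z : ℂ) (w : ℂ)) 1 (Set.rangeFactorization φ)

attribute [instance] ConfSurface.t

/-- A Riemann surface (here: a space with a distance function representing its conformal
structure) is of S-type if it admits no conformal embedding onto a proper open subset of
another Riemann surface such that the inclusion is a homotopy equivalence. -/
def IsSTypeSurface (R : Type) [TopologicalSpace R] (dR : R → R → ℝ) : Prop :=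
  ¬ ∃ (W : ConfSurface) (U : Set W.X) (f : R → ↥U),
      IsOpen U ∧ U ≠ Set.univ ∧
      IsConformalHomeo dR (fun a b : ↥U => W.d a.1 b.1) f ∧
      ∃ rtr : C(W.X, ↥U),
        ContinuousMap.Homotopic
          ((⟨Subtype.val, continuous_subtype_val⟩ : C(↥U, W.X)).comp rtr)
          (ContinuousMap.id W.X) ∧
        ContinuousMap.Homotopic
          (rtr.comp (⟨Subtype.val, continuous_subtype_val⟩ : C(↥U, W.X)))
          (ContinuousMap.id ↥U)

/-! ### Auxiliary material for the discreteness proof -/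

section DiscretenessAux

open OnePoint

/-- The exterior of a closed ball in `ℂ` is connected. -/
lemma isConnected_norm_gt {r : ℝ} (hr : 0 ≤ r) : IsConnected {z : ℂ | r < ‖z‖} := by
  have h1 : IsConnected (Set.Ioi r ×ˢ Metric.sphere (0 : ℂ) 1) :=
    isConnected_Ioi.prod (isConnected_sphere
      (by norm_num [Complex.rank_real_complex]) 0 zero_le_one)
  have h2 : (fun p : ℝ × ℂ => p.1 • p.2) '' (Set.Ioi r ×ˢ Metric.sphere (0 : ℂ) 1)
      = {z : ℂ | r < ‖z‖} := by
    ext z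
    constructor
    · rintro ⟨⟨t, u⟩, ⟨ht, hu⟩, rfl⟩
      have hu1 : ‖u‖ = 1 := by simpa using hu
      have htpos : 0 < t := lt_of_le_of_lt hr ht
      simp only [Set.mem_setOf_eq, norm_smul, hu1, mul_one, Real.norm_eq_abs,
        abs_of_pos htpos]
      exact ht
    · intro hz
      have hz0 : z ≠ 0 := by
        intro h; rw [h] at hz; simp at hz; exact absurd hz (not_lt.2 hr)
      have hnz : (0 : ℝ) < ‖z‖ := norm_pos_iff.2 hz0
      have hnz' : ‖z‖ ≠ 0 := by
        exact ne_of_gt hnz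
      refine ⟨(‖z‖, ‖z‖⁻¹ • z), ⟨hz, ?_⟩, ?_⟩
      · simp [norm_smul, abs_of_pos (inv_pos.2 hnz),
          inv_mul_cancel₀ hnz']
      · dsimp only
        rw [smul_smul, mul_inv_cancel₀ (ne_of_gt hnz), one_smul]
  rw [← h2]
  exact h1.image _ (continuous_fst.smul continuous_snd).continuousOn

/-- The standard connected open neighborhood of `∞` in the Riemann sphere. -/
def bigV (r : ℝ) : Set RSphere :=
  {(OnePoint.infty : RSphere)} ∪ (fun z : ℂ => (z : RSphere)) '' {z : ℂ | r < ‖z‖}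

lemma infty_mem_bigV (r : ℝ) : (OnePoint.infty : RSphere) ∈ bigV r := Or.inl rfl

lemma preimage_bigV (r : ℝ) :
    ((↑) : ℂ → RSphere) ⁻¹' bigV r = {z : ℂ | r < ‖z‖} := by
  rw [bigV, Set.preimage_union]
  rw [show ({(OnePoint.infty : RSphere)} : Set RSphere) = {∞} from rfl]
  rw [OnePoint.coe_preimage_infty, Set.preimage_image_eq _ OnePoint.coe_injective]
  simp

lemma isOpen_bigV {r : ℝ} : IsOpen (bigV r) := by
  rw [OnePoint.isOpen_iff_of_mem (infty_mem_bigV r), preimage_bigV]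
  have : {z : ℂ | r < ‖z‖}ᶜ = Metric.closedBall 0 r := by
    ext z; simp [Metric.mem_closedBall, dist_zero_right, not_lt]
  rw [this]
  exact ⟨Metric.isClosed_closedBall, isCompact_closedBall 0 r⟩

lemma isConnected_bigV {r : ℝ} (hr : 0 ≤ r) : IsConnected (bigV r) := by
  have hA : IsConnected ((fun z : ℂ => (z : RSphere)) '' {z : ℂ | r < ‖z‖}) :=
    (isConnected_norm_gt hr).image _ OnePoint.continuous_coe.continuousOn
  refine hA.subset_closure Set.subset_union_right ?_
  rintro x (rfl | hx)
  · rw [mem_closure_iff_nhds_basis OnePoint.hasBasis_nhds_infty]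
    rintro K ⟨hKcl, hKcp⟩
    obtain ⟨R, hR⟩ := hKcp.isBounded.subset_closedBall 0
    set t : ℝ := max r R + 1 with ht
    have htr : r < t := lt_of_le_of_lt (le_max_left r R) (lt_add_one _)
    have htR : R < t := lt_of_le_of_lt (le_max_right r R) (lt_add_one _)
    have htpos : 0 < t := lt_of_le_of_lt hr htr
    refine ⟨((t : ℂ) : RSphere), ⟨(t : ℂ), ?_, rfl⟩, ?_⟩
    · simp only [Set.mem_setOf_eq, Complex.norm_real, Real.norm_eq_abs,
        abs_of_pos htpos]
      exact htr
    · left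
      refine ⟨(t : ℂ), fun hK => ?_, rfl⟩
      have := hR hK
      rw [Metric.mem_closedBall, dist_zero_right] at this
      rw [Complex.norm_real, Real.norm_eq_abs, abs_of_pos htpos] at this
      exact absurd this (not_le.2 htR)
  · exact subset_closure hx

instance : LocallyConnectedSpace RSphere := by
  rw [locallyConnectedSpace_iff_subsets_isOpen_isConnected]
  intro x U hU
  induction x using OnePoint.rec with
  | infty =>
    rw [OnePoint.hasBasis_nhds_infty.mem_iff] at hU
    obtain ⟨K, ⟨hKcl, hKcp⟩, hKU⟩ := hU
    obtain ⟨R, hR⟩ := hKcp.isBounded.subset_closedBall 0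
    set r : ℝ := max R 0 with hrdef
    refine ⟨bigV r, ?_, isOpen_bigV, infty_mem_bigV r, isConnected_bigV (le_max_right R 0)⟩
    rintro y (rfl | ⟨z, hz, rfl⟩)
    · exact hKU (Or.inr rfl)
    · refine hKU (Or.inl ⟨z, fun hzK => ?_, rfl⟩)
      have := hR hzK
      rw [Metric.mem_closedBall, dist_zero_right] at this
      exact absurd (lt_of_le_of_lt (le_trans this (le_max_left R 0)) hz) (lt_irrefl _)
  | coe z =>
    have hU' : ((↑) : ℂ → RSphere) ⁻¹' U ∈ nhds z := by
      rw [OnePoint.nhds_coe_eq] at hU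
      exact Filter.mem_map.1 hU
    obtain ⟨V, hVU, hVo, hzV, hVc⟩ :=
      locallyConnectedSpace_iff_subsets_isOpen_isConnected.1 inferInstance z _ hU'
    refine ⟨(fun w : ℂ => (w : RSphere)) '' V, ?_, OnePoint.isOpen_image_coe.2 hVo,
      ⟨z, hzV, rfl⟩, hVc.image _ OnePoint.continuous_coe.continuousOn⟩
    rintro y ⟨w, hwV, rfl⟩
    exact hVU hwV

instance : CompactSpace S1 := by
  have h : IsCompact {z : ℂ | ‖z‖ = 1} := by
    have : {z : ℂ | ‖z‖ = 1} = Metric.sphere 0 1 := by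
      ext z; simp [Complex.dist_eq]
    rw [this]
    exact isCompact_sphere 0 1
  exact isCompact_iff_compactSpace.1 h

variable {ι : Type}

namespace AdmissibleConfig

variable (cfg : AdmissibleConfig ι)

lemma curve_jordan (j : ι ⊕ ι) : IsJordanCurve (cfg.curve j) := by
  cases j with
  | inl i => exact cfg.jordanC i
  | inr i => exact cfg.jordanC' i

lemma curve_nonempty (j : ι ⊕ ι) : (cfg.curve j).Nonempty := by
  obtain ⟨f, -, -, hr⟩ := cfg.curve_jordan j
  exact ⟨f s1one, hr ▸ ⟨s1one, rfl⟩⟩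

lemma curve_closed (j : ι ⊕ ι) : IsClosed (cfg.curve j) := by
  obtain ⟨f, hc, -, hr⟩ := cfg.curve_jordan j
  exact hr ▸ (isCompact_range hc).isClosed

lemma z0_mem_ext (j : ι ⊕ ι) : cfg.z0 ∈ cfg.Ext (cfg.curve j) :=
  mem_connectedComponentIn (cfg.z0_off j)

lemma ext_open (j : ι ⊕ ι) : IsOpen (cfg.Ext (cfg.curve j)) :=
  (cfg.curve_closed j).isOpen_compl.connectedComponentIn

end AdmissibleConfig

/-- In a locally connected space, a point of `F` in the closure of a connected component
of the open set `F` belongs to that component. -/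
lemma mem_cc_of_mem_closure {F : Set RSphere} (hF : IsOpen F) {y x : RSphere}
    (hx : x ∈ closure (connectedComponentIn F y)) (hxF : x ∈ F) :
    x ∈ connectedComponentIn F y := by
  obtain ⟨V, hVF, hVo, hxV, hVc⟩ :=
    locallyConnectedSpace_iff_subsets_isOpen_isConnected.1 inferInstance x F (hF.mem_nhds hxF)
  obtain ⟨w, hwV, hwc⟩ := mem_closure_iff.1 hx V hVo hxV
  have h1 : V ⊆ connectedComponentIn F w :=
    hVc.isPreconnected.subset_connectedComponentIn hwV hVF
  have h2 : connectedComponentIn F y = connectedComponentIn F w := connectedComponentIn_eq hwc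
  exact h2 ▸ h1 hxV

namespace AdmissibleConfig

variable (cfg : AdmissibleConfig ι)

/-- The interior of a curve of the configuration is contained in the exterior of any
other curve of the configuration. -/
lemma intr_subset_ext {j k : ι ⊕ ι} (hjk : j ≠ k) :
    cfg.Intr (cfg.curve j) ⊆ cfg.Ext (cfg.curve k) := by
  intro x hx
  obtain ⟨hxc, hxE⟩ := hx
  by_contra hxEk
  have hcurvek_sub : cfg.curve k ⊆ cfg.Ext (cfg.curve j) := cfg.not_separating j k hjk
  have hcurvej_sub : cfg.curve j ⊆ cfg.Ext (cfg.curve k) := cfg.not_separating k j hjk.symm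
  have hxck : x ∈ (cfg.curve k)ᶜ := fun hxk => hxE (hcurvek_sub hxk)
  set X := connectedComponentIn (cfg.curve j)ᶜ x with hXdef
  set Y := connectedComponentIn (cfg.curve k)ᶜ x with hYdef
  have hxX : x ∈ X := mem_connectedComponentIn hxc
  have hxY : x ∈ Y := mem_connectedComponentIn hxck
  -- X is disjoint from Ext (curve j)
  have hXE : ∀ p ∈ X, p ∉ cfg.Ext (cfg.curve j) := by
    intro p hpX hpE
    have e1 := connectedComponentIn_eq hpX
    have e2 := connectedComponentIn_eq (hpE : p ∈ connectedComponentIn (cfg.curve j)ᶜ cfg.z0)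
    exact hxE (show x ∈ connectedComponentIn (cfg.curve j)ᶜ cfg.z0 by rw [e2, ← e1]; exact hxX)
  have hYE : ∀ p ∈ Y, p ∉ cfg.Ext (cfg.curve k) := by
    intro p hpY hpE
    have e1 := connectedComponentIn_eq hpY
    have e2 := connectedComponentIn_eq (hpE : p ∈ connectedComponentIn (cfg.curve k)ᶜ cfg.z0)
    exact hxEk (show x ∈ connectedComponentIn (cfg.curve k)ᶜ cfg.z0 by rw [e2, ← e1]; exact hxY)
  have hXk : X ⊆ (cfg.curve k)ᶜ := fun p hp hpk => hXE p hp (hcurvek_sub hpk)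
  have hYj : Y ⊆ (cfg.curve j)ᶜ := fun p hp hpj => hYE p hp (hcurvej_sub hpj)
  have hXY : X ⊆ Y :=
    (isPreconnected_connectedComponentIn).subset_connectedComponentIn hxX hXk
  have hYX : Y ⊆ X :=
    (isPreconnected_connectedComponentIn).subset_connectedComponentIn hxY hYj
  have hXeqY : X = Y := Set.Subset.antisymm hXY hYX
  have hXclosure : closure X ⊆ X := by
    intro p hp
    by_cases hpj : p ∈ cfg.curve j
    · have hpk : p ∈ (cfg.curve k)ᶜ := by
        intro hpk
        exact (Set.disjoint_left.1 (cfg.disj j k hjk) hpj) hpk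
      rw [hXeqY] at hp
      have hpy : p ∈ Y :=
        mem_cc_of_mem_closure (cfg.curve_closed k).isOpen_compl hp hpk
      rw [hXeqY]
      exact hpy
    · exact mem_cc_of_mem_closure (cfg.curve_closed j).isOpen_compl hp hpj
  have hXuniv : X = Set.univ :=
    IsClopen.eq_univ
      ⟨isClosed_of_closure_subset hXclosure,
        (cfg.curve_closed j).isOpen_compl.connectedComponentIn⟩ ⟨x, hxX⟩
  obtain ⟨q, hq⟩ := cfg.curve_nonempty j
  exact (connectedComponentIn_subset _ _ (hXuniv ▸ Set.mem_univ q : q ∈ X)) hq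

lemma compl_ext_subset_ext {j k : ι ⊕ ι} (hjk : j ≠ k) :
    (cfg.Ext (cfg.curve j))ᶜ ⊆ cfg.Ext (cfg.curve k) := by
  intro x hx
  by_cases hxj : x ∈ cfg.curve j
  · exact cfg.not_separating k j hjk.symm hxj
  · exact cfg.intr_subset_ext hjk ⟨hxj, hx⟩

/-- The interior of the common exterior of an admissible configuration is nonempty
(as soon as there is at least one curve). -/
lemma exists_open_subset_extC (j0 : ι ⊕ ι) :
    ∃ V : Set RSphere, IsOpen V ∧ V.Nonempty ∧ V ⊆ cfg.extC := by
  have hEopen : IsOpen (cfg.Ext (cfg.curve j0)) := cfg.ext_open j0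
  have hEne : (cfg.Ext (cfg.curve j0)).Nonempty := ⟨_, cfg.z0_mem_ext j0⟩
  have hnotclosed : ¬ closure (cfg.Ext (cfg.curve j0)) ⊆ cfg.Ext (cfg.curve j0) := by
    intro hcl
    have hclosed : IsClosed (cfg.Ext (cfg.curve j0)) := isClosed_of_closure_subset hcl
    have huniv : cfg.Ext (cfg.curve j0) = Set.univ :=
      IsClopen.eq_univ ⟨hclosed, hEopen⟩ hEne
    obtain ⟨q, hq⟩ := cfg.curve_nonempty j0
    exact (connectedComponentIn_subset _ _
      (huniv ▸ Set.mem_univ q : q ∈ cfg.Ext (cfg.curve j0))) hq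
  obtain ⟨x, hxcl, hxE⟩ := Set.not_subset.1 hnotclosed
  have hxj : x ∈ cfg.curve j0 := by
    by_contra hxj
    exact hxE (mem_cc_of_mem_closure (cfg.curve_closed j0).isOpen_compl hxcl hxj)
  have hW := cfg.not_limit j0 x hxj
  have hWopen : IsOpen (closure (⋃ k ∈ {k : ι ⊕ ι | k ≠ j0}, cfg.curve k))ᶜ :=
    isClosed_closure.isOpen_compl
  obtain ⟨U, hUsub, hUopen, hxU, hUconn⟩ :=
    locallyConnectedSpace_iff_subsets_isOpen_isConnected.1 inferInstance x _
      (hWopen.mem_nhds hW)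
  refine ⟨U ∩ cfg.Ext (cfg.curve j0), hUopen.inter hEopen, ?_, ?_⟩
  · obtain ⟨w, hw⟩ := mem_closure_iff.1 hxcl U hUopen hxU
    exact ⟨w, hw⟩
  · rintro y ⟨hyU, hyE⟩
    show y ∈ ⋂ j : ι ⊕ ι, cfg.Ext (cfg.curve j)
    refine Set.mem_iInter.2 fun t => ?_
    by_cases ht : t = j0
    · rw [ht]; exact hyE
    · have hUc : U ⊆ (cfg.curve t)ᶜ := by
        intro p hp hpt
        exact (hUsub hp) (subset_closure (Set.mem_biUnion ht hpt))
      have hxEt : x ∈ cfg.Ext (cfg.curve t) := cfg.not_separating t j0 ht hxj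
      have hU' : U ⊆ connectedComponentIn (cfg.curve t)ᶜ x :=
        hUconn.isPreconnected.subset_connectedComponentIn hxU hUc
      have e : connectedComponentIn (cfg.curve t)ᶜ cfg.z0
          = connectedComponentIn (cfg.curve t)ᶜ x :=
        connectedComponentIn_eq hxEt
      show y ∈ connectedComponentIn (cfg.curve t)ᶜ cfg.z0
      rw [e]
      exact hU' hyU

end AdmissibleConfig

/-! ### Letters, words, and reduction -/

/-- The permutation associated to a signed letter. -/
def lPerm (g : ι → Equiv.Perm RSphere) (s : ι × Bool) : Equiv.Perm RSphere :=
  if s.2 then g s.1 else (g s.1)⁻¹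

/-- The target curve index of a letter. -/
def tgt (s : ι × Bool) : ι ⊕ ι := if s.2 then Sum.inr s.1 else Sum.inl s.1

/-- The source curve index of a letter. -/
def src (s : ι × Bool) : ι ⊕ ι := if s.2 then Sum.inl s.1 else Sum.inr s.1

/-- Two adjacent letters do not cancel. -/
def okPair (s s' : ι × Bool) : Prop := ¬(s.1 = s'.1 ∧ s.2 = !s'.2)

lemma src_ne_tgt {s s' : ι × Bool} (h : okPair s s') : src s ≠ tgt s' := by
  obtain ⟨i, b⟩ := s
  obtain ⟨i', b'⟩ := s'
  cases b <;> cases b' <;> simp_all [src, tgt, okPair]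

lemma lPerm_cancel (g : ι → Equiv.Perm RSphere) {s s' : ι × Bool}
    (h : s.1 = s'.1 ∧ s.2 = !s'.2) : lPerm g s * lPerm g s' = 1 := by
  obtain ⟨i, b⟩ := s
  obtain ⟨i', b'⟩ := s'
  obtain ⟨h1, h2⟩ := h
  dsimp at h1 h2
  subst h1
  cases b' <;> simp_all [lPerm]

/-- Push a letter onto a reduced word, cancelling if needed. -/
def pushLetter [DecidableEq ι] (s : ι × Bool) : List (ι × Bool) → List (ι × Bool)
  | [] => [s]
  | s' :: m => if s.1 = s'.1 ∧ s.2 = !s'.2 then m else s :: s' :: m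

/-- Reduce a word. -/
def redWord [DecidableEq ι] : List (ι × Bool) → List (ι × Bool)
  | [] => []
  | s :: l => pushLetter s (redWord l)

lemma pushLetter_chain [DecidableEq ι] (s : ι × Bool) {l : List (ι × Bool)}
    (hl : l.Chain' okPair) : (pushLetter s l).Chain' okPair := by
  cases l with
  | nil => simp [pushLetter, List.Chain']
  | cons s' m =>
    rw [pushLetter]
    split
    · exact hl.tail
    · exact List.isChain_cons_cons.2 ⟨by assumption, hl⟩

lemma pushLetter_prod [DecidableEq ι] (g : ι → Equiv.Perm RSphere) (s : ι × Bool)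
    (l : List (ι × Bool)) :
    ((pushLetter s l).map (lPerm g)).prod = lPerm g s * (l.map (lPerm g)).prod := by
  cases l with
  | nil => simp [pushLetter]
  | cons s' m =>
    rw [pushLetter]
    split
    · rename_i h
      rw [List.map_cons, List.prod_cons, ← mul_assoc, lPerm_cancel g h, one_mul]
    · simp [List.prod_cons]

lemma redWord_chain [DecidableEq ι] (l : List (ι × Bool)) :
    (redWord l).Chain' okPair := by
  induction l with
  | nil => simp [redWord, List.Chain']
  | cons s l ih => exact pushLetter_chain s ih

lemma redWord_prod [DecidableEq ι] (g : ι → Equiv.Perm RSphere) (l : List (ι × Bool)) :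
    ((redWord l).map (lPerm g)).prod = (l.map (lPerm g)).prod := by
  induction l with
  | nil => rfl
  | cons s l ih =>
    rw [redWord, pushLetter_prod, ih, List.map_cons, List.prod_cons]

namespace SchottkyData

variable (S : SchottkyData ι)

lemma step (s : ι × Bool) {p : RSphere} (hp : p ∈ S.cfg.Ext (S.cfg.curve (src s))) :
    (lPerm S.g s) p ∈ (S.cfg.Ext (S.cfg.curve (tgt s)))ᶜ := by
  obtain ⟨i, b⟩ := s
  cases b with
  | true =>
    have hp' : p ∈ S.cfg.Ext (S.cfg.C i) := hp
    have himg : (S.g i) p ∈ S.cfg.Intr (S.cfg.C' i) :=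
      S.pairing i ▸ Set.mem_image_of_mem (S.g i) hp'
    exact fun hc => himg.2 hc
  | false =>
    have hp' : p ∈ S.cfg.Ext (S.cfg.C' i) := hp
    intro hmem
    have hmem' : (S.g i)⁻¹ p ∈ S.cfg.Ext (S.cfg.C i) := hmem
    have himg : p ∈ (S.g i) '' (S.cfg.Ext (S.cfg.C i)) :=
      ⟨(S.g i)⁻¹ p, hmem', Equiv.apply_symm_apply _ _⟩
    rw [S.pairing i] at himg
    exact himg.2 hp'

lemma pingpong {pt : RSphere} (hpt : ∀ j, pt ∈ S.cfg.Ext (S.cfg.curve j)) :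
    ∀ (m : List (ι × Bool)) (s : ι × Bool), (s :: m).Chain' okPair →
      (((s :: m).map (lPerm S.g)).prod) pt ∈ (S.cfg.Ext (S.cfg.curve (tgt s)))ᶜ := by
  intro m
  induction m with
  | nil =>
    intro s _
    simpa using S.step s (hpt (src s))
  | cons s' m' ih =>
    intro s hchain
    obtain ⟨hok, hchain'⟩ := List.isChain_cons_cons.1 hchain
    have h2 := ih s' hchain'
    have h3 : (((s' :: m').map (lPerm S.g)).prod) pt ∈ S.cfg.Ext (S.cfg.curve (src s)) :=
      S.cfg.compl_ext_subset_ext (src_ne_tgt hok).symm h2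
    have h4 := S.step s h3
    simpa [List.prod_cons, Equiv.Perm.mul_apply] using h4

lemma key [DecidableEq ι] {pt : RSphere} (hpt : ∀ j, pt ∈ S.cfg.Ext (S.cfg.curve j))
    {u : Equiv.Perm RSphere} (hu : u ∈ S.G) :
    u = 1 ∨ ∃ t, u pt ∈ (S.cfg.Ext (S.cfg.curve t))ᶜ := by
  have hu' : u ∈ Submonoid.closure (Set.range S.g ∪ (Set.range S.g)⁻¹) := by
    rw [← Subgroup.closure_toSubmonoid]
    exact hu
  obtain ⟨l, hl, hlp⟩ := Submonoid.exists_list_of_mem_closure hu'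
  have hletters : ∀ l' : List (Equiv.Perm RSphere),
      (∀ y ∈ l', y ∈ Set.range S.g ∪ (Set.range S.g)⁻¹) →
      ∃ L : List (ι × Bool), (L.map (lPerm S.g)).prod = l'.prod := by
    intro l' hl'
    induction l' with
    | nil => exact ⟨[], by simp⟩
    | cons y l'' ih =>
      obtain ⟨L, hL⟩ := ih fun z hz => hl' z (List.mem_cons_of_mem _ hz)
      rcases hl' y (List.mem_cons_self) with hy | hy
      · obtain ⟨i, hi⟩ := hy
        exact ⟨(i, true) :: L, by simp [lPerm, hi, hL, List.prod_cons]⟩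
      · rw [Set.mem_inv] at hy
        obtain ⟨i, hi⟩ := hy
        refine ⟨(i, false) :: L, ?_⟩
        rw [List.map_cons, List.prod_cons, hL, List.prod_cons]
        congr 1
        simp only [lPerm, if_neg Bool.false_ne_true]
        rw [hi, inv_inv]
  obtain ⟨L, hLprod⟩ := hletters l hl
  have hred : ((redWord L).map (lPerm S.g)).prod = u := by
    rw [redWord_prod, hLprod, hlp]
  cases hcase : redWord L with
  | nil =>
    left
    rw [hcase] at hred
    simpa using hred.symm
  | cons s m =>
    right
    refine ⟨tgt s, ?_⟩
    have hp := S.pingpong hpt m s (hcase ▸ redWord_chain L)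
    rw [hcase] at hred
    rw [← hred]
    exact hp

end SchottkyData

end DiscretenessAux

/-- **Proposition 2.1 (3),(4).** If the interior of the common exterior is non-empty then `G`
is discrete (a Schottky-like group); if moreover all configuration curves are circles then `G`
is discrete without that assumption (a classical Schottky-like group). -/
theorem discreteness_of_schottky_like (S : SchottkyData ℕ) :
    ((interior S.cfg.extC).Nonempty → IsDiscreteSubgroup S.G) ∧
      (S.IsClassical → IsDiscreteSubgroup S.G) := by
  suffices h : IsDiscreteSubgroup S.G from ⟨fun _ => h, fun _ => h⟩
  intro u hu
  obtain ⟨V, hVopen, ⟨pt, hptV⟩, hVsub⟩ := S.cfg.exists_open_subset_extC (Sum.inl 0)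
  have hpt : ∀ j, pt ∈ S.cfg.Ext (S.cfg.curve j) := fun j =>
    Set.mem_iInter.1 (hVsub hptV) j
  have hev : ∀ᶠ n in atTop, (u n : Equiv.Perm RSphere) pt ∈ V :=
    (hu pt).eventually_mem (hVopen.mem_nhds hptV)
  filter_upwards [hev] with n hn
  rcases S.key hpt (u n).2 with h1 | ⟨t, ht⟩
  · exact h1
  · exact absurd (Set.mem_iInter.1 (hVsub hn) t) ht

end SchottkyPaper
end
end

section
/- Let G = ⟨g_i : i ∈ ℕ⟩ be a classical Schottky-like group with respect to the admissible configuration of circles 𝒞 = {C_i, C_i′}_{i∈ℕ}. Then the accumulation set Λ′ of the configuration circles is a closed subset of the limit set Λ(G). (Lemma 2.2) -/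
open Filter Topology Set

noncomputable section

namespace SchottkyPaper

/-! ### Auxiliary material for Lemma 2.2 -/

section Lemma22Aux

open Metric

instance : FirstCountableTopology RSphere := by
  constructor
  intro x
  cases x using OnePoint.rec with
  | infty =>
    rw [OnePoint.nhds_infty_eq, Filter.coclosedCompact_eq_cocompact,
      ← comap_dist_left_atTop_eq_cocompact (0 : ℂ)]
    infer_instance
  | coe y => rw [OnePoint.nhds_coe_eq]; infer_instance

/-- Packing lemma: in a pairwise disjoint family of closed balls in `ℂ`, only finitely many
balls have radius `≥ δ` and contain a point of norm `≤ M`. -/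
lemma finite_big_balls (a : ℕ → ℂ) (r : ℕ → ℝ) (hr : ∀ n, 0 < r n)
    (hd : ∀ m n, m ≠ n → ∀ z : ℂ,
      z ∈ closedBall (a m) (r m) → z ∈ closedBall (a n) (r n) → False)
    (q : ℕ → ℂ) (hq : ∀ n, q n ∈ closedBall (a n) (r n)) (δ M : ℝ) (hδ : 0 < δ) :
    {n | δ ≤ r n ∧ ‖q n‖ ≤ M}.Finite := by
  by_contra hinf
  have hinf' : {n | δ ≤ r n ∧ ‖q n‖ ≤ M}.Infinite := hinf
  set c : ℕ → ℂ := fun n =>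
    if dist (q n) (a n) ≤ δ / 2 then a n
    else q n + ((δ / 2 / dist (q n) (a n)) : ℝ) • (a n - q n) with hc
  have hcdist : ∀ n, ¬ dist (q n) (a n) ≤ δ / 2 →
      dist (c n) (a n) = dist (q n) (a n) - δ / 2 := by
    intro n h
    have hd0 : (0:ℝ) < dist (q n) (a n) := lt_of_le_of_lt (by linarith) (not_le.1 h)
    have hkey : c n - a n = ((1 : ℝ) - δ / 2 / dist (q n) (a n)) • (q n - a n) := by
      simp only [hc, if_neg h]
      rw [sub_smul, one_smul, smul_sub, smul_sub]
      module
    rw [dist_eq_norm, hkey, norm_smul, Real.norm_eq_abs, abs_of_nonneg, ← dist_eq_norm]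
    · rw [sub_mul, one_mul, div_mul_cancel₀ _ (ne_of_gt hd0)]
    · have h1 : δ / 2 / dist (q n) (a n) ≤ 1 := by
        rw [div_le_one hd0]; linarith [not_le.1 h]
      linarith
  have hball : ∀ n, δ ≤ r n → ball (c n) (δ / 2) ⊆ closedBall (a n) (r n) := by
    intro n hδr y hy
    rw [mem_ball] at hy
    rw [mem_closedBall]
    have hqr : dist (q n) (a n) ≤ r n := mem_closedBall.1 (hq n)
    by_cases h : dist (q n) (a n) ≤ δ / 2
    · have hca : c n = a n := by simp only [hc, if_pos h]
      rw [hca] at hy; linarith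
    · have htr := dist_triangle y (c n) (a n)
      rw [hcdist n h] at htr
      linarith
  have hnorm : ∀ n, ‖q n‖ ≤ M → ‖c n‖ ≤ M + δ / 2 := by
    intro n hM
    by_cases h : dist (q n) (a n) ≤ δ / 2
    · simp only [hc, if_pos h]
      have h1 : ‖a n‖ ≤ ‖q n‖ + ‖q n - a n‖ := by
        calc ‖a n‖ = ‖q n - (q n - a n)‖ := by rw [sub_sub_cancel]
          _ ≤ ‖q n‖ + ‖q n - a n‖ := norm_sub_le _ _
      rw [← dist_eq_norm] at h1
      linarith
    · have hd0 : (0:ℝ) < dist (q n) (a n) := lt_of_le_of_lt (by linarith) (not_le.1 h)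
      simp only [hc, if_neg h]
      have h2 : ‖((δ / 2 / dist (q n) (a n)) : ℝ) • (a n - q n)‖ = δ / 2 := by
        rw [norm_smul, Real.norm_eq_abs, abs_of_nonneg (by positivity), ← dist_eq_norm',
          div_mul_cancel₀ _ (ne_of_gt hd0)]
      calc ‖q n + ((δ / 2 / dist (q n) (a n)) : ℝ) • (a n - q n)‖
          ≤ ‖q n‖ + ‖((δ / 2 / dist (q n) (a n)) : ℝ) • (a n - q n)‖ := norm_add_le _ _
        _ ≤ M + δ / 2 := by rw [h2]; linarith
  have hsep : ∀ m n, m ≠ n → δ ≤ r m → δ ≤ r n → δ ≤ dist (c m) (c n) := by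
    intro m n hmn hm hn
    by_contra hlt
    push_neg at hlt
    have h2 : ‖(2:ℂ)‖ = 2 := by norm_num
    have hz1 : (c m + c n) / 2 ∈ ball (c m) (δ / 2) := by
      rw [mem_ball, dist_eq_norm]
      have he : (c m + c n) / 2 - c m = (c n - c m) / 2 := by ring
      rw [he, norm_div, h2]
      rw [dist_eq_norm'] at hlt
      linarith
    have hz2 : (c m + c n) / 2 ∈ ball (c n) (δ / 2) := by
      rw [mem_ball, dist_eq_norm]
      have he : (c m + c n) / 2 - c n = (c m - c n) / 2 := by ring
      rw [he, norm_div, h2]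
      rw [dist_eq_norm] at hlt
      linarith
    exact hd m n hmn _ (hball m hm hz1) (hball n hn hz2)
  -- extract a convergent subsequence of centers, contradiction with δ-separation
  let f := Set.Infinite.natEmbedding _ hinf'
  have hf : ∀ k, (f k : ℕ) ∈ {n | δ ≤ r n ∧ ‖q n‖ ≤ M} := fun k => (f k).2
  have hmem : ∀ k, (fun k => c ((f k : ℕ))) k ∈ closedBall (0:ℂ) (M + δ / 2) := fun k =>
    mem_closedBall_zero_iff.2 (hnorm _ (hf k).2)
  obtain ⟨L, -, φ, hφ, hconv⟩ :=
    (isCompact_closedBall (0:ℂ) (M + δ / 2)).tendsto_subseq hmem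
  rw [Metric.tendsto_atTop] at hconv
  obtain ⟨N, hN⟩ := hconv (δ / 2) (by linarith)
  have h1 := hN N (le_refl N)
  have h2 := hN (N + 1) (Nat.le_succ N)
  have hne : ((f (φ N)) : ℕ) ≠ ((f (φ (N + 1))) : ℕ) := by
    intro hcontra
    have e1 : f (φ N) = f (φ (N + 1)) := Subtype.coe_injective hcontra
    have e2 : φ N = φ (N + 1) := f.injective e1
    have e3 : N = N + 1 := hφ.injective e2
    omega
  have hsep' := hsep _ _ hne (hf (φ N)).1 (hf (φ (N + 1))).1
  have := dist_triangle (c ((f (φ N)) : ℕ)) L (c ((f (φ (N + 1))) : ℕ))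
  simp only [Function.comp] at h1 h2
  rw [dist_comm L _] at this
  linarith

lemma circleSet_eq_image (a : ℂ) (r : ℝ) :
    circleSet a r = ((↑) : ℂ → RSphere) '' Metric.sphere a r := by
  ext w
  constructor
  · rintro ⟨u, rfl, hu⟩
    exact ⟨u, by rw [mem_sphere_iff_norm]; exact hu, rfl⟩
  · rintro ⟨u, hu, rfl⟩
    exact ⟨u, rfl, by rw [← mem_sphere_iff_norm]; exact hu⟩

lemma isConnected_compl_closedBall_complex (a : ℂ) (r : ℝ) (hr : 0 < r) :
    IsConnected ((closedBall a r)ᶜ) := by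
  have hrank : 1 < Module.rank ℝ ℂ := by rw [Complex.rank_real_complex]; norm_num
  have h1 : IsConnected ((Ioi r) ×ˢ (sphere (0:ℂ) 1)) :=
    (isConnected_Ioi).prod (isConnected_sphere hrank 0 zero_le_one)
  have h2 : IsConnected ((fun p : ℝ × ℂ => a + p.1 • p.2) '' ((Ioi r) ×ˢ (sphere (0:ℂ) 1))) :=
    h1.image _ (Continuous.continuousOn (by fun_prop))
  have heq : (fun p : ℝ × ℂ => a + p.1 • p.2) '' ((Ioi r) ×ˢ (sphere (0:ℂ) 1))
      = (closedBall a r)ᶜ := by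
    ext z
    simp only [mem_image, mem_prod, mem_Ioi, mem_sphere_iff_norm, sub_zero, mem_compl_iff,
      mem_closedBall, not_le, Prod.exists]
    constructor
    · rintro ⟨t, y, ⟨ht, hy⟩, rfl⟩
      rw [dist_eq_norm, add_sub_cancel_left, norm_smul, Real.norm_eq_abs,
        abs_of_pos (lt_trans hr ht), hy, mul_one]
      exact ht
    · intro hz
      have hz0 : z - a ≠ 0 := by
        intro h
        rw [dist_eq_norm, h] at hz
        simp at hz
        linarith
      have hzpos : 0 < ‖z - a‖ := norm_pos_iff.2 hz0
      refine ⟨‖z - a‖, ‖z - a‖⁻¹ • (z - a), ⟨?_, ?_⟩, ?_⟩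
      · rwa [dist_eq_norm] at hz
      · rw [norm_smul, Real.norm_eq_abs, abs_of_pos (by positivity),
          inv_mul_cancel₀ (ne_of_gt hzpos)]
      · rw [smul_smul, mul_inv_cancel₀ (ne_of_gt hzpos), one_smul, add_sub_cancel]
  rwa [heq] at h2

lemma infty_notMem_image (s : Set ℂ) : (OnePoint.infty : RSphere) ∉ ((↑) : ℂ → RSphere) '' s := by
  rintro ⟨u, -, hu⟩
  exact OnePoint.coe_ne_infty u hu

lemma isConnected_compl_image_closedBall (a : ℂ) (r : ℝ) (hr : 0 < r) :
    IsConnected ((((↑) : ℂ → RSphere) '' closedBall a r)ᶜ) := by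
  set s : Set RSphere := ((↑) : ℂ → RSphere) '' (closedBall a r)ᶜ with hs
  have hsconn : IsConnected s :=
    (isConnected_compl_closedBall_complex a r hr).image _
      OnePoint.continuous_coe.continuousOn
  have hsub : s ⊆ (((↑) : ℂ → RSphere) '' closedBall a r)ᶜ := by
    rintro - ⟨u, hu, rfl⟩ ⟨u', hu', he⟩
    exact hu (OnePoint.coe_injective he ▸ hu')
  have hinfcl : (OnePoint.infty : RSphere) ∈ closure s := by
    have h1 : Tendsto (fun k : ℕ => (a + ((r + 1 + (k:ℝ) : ℝ) : ℂ))) atTop (cocompact ℂ) := by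
      apply tendsto_cocompact_of_tendsto_dist_comp_atTop (0 : ℂ)
      apply tendsto_atTop_mono (fun k : ℕ => ?_)
        (tendsto_atTop_add_const_left _ (r + 1 - ‖a‖) tendsto_natCast_atTop_atTop)
      have e1 : ‖((r + 1 + (k:ℝ) : ℝ) : ℂ)‖ = r + 1 + (k:ℝ) := by
        rw [Complex.norm_real, Real.norm_eq_abs, abs_of_pos (by positivity)]
      have e2 : ‖a + ((r + 1 + (k:ℝ) : ℝ) : ℂ)‖ ≥ ‖((r + 1 + (k:ℝ) : ℝ) : ℂ)‖ - ‖a‖ := by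
        have := norm_sub_le (a + ((r + 1 + (k:ℝ) : ℝ) : ℂ)) a
        simp only [add_sub_cancel_left] at this
        linarith
      rw [dist_zero_right]
      rw [e1] at e2
      linarith
    rw [← Filter.coclosedCompact_eq_cocompact] at h1
    have h2 : Tendsto (fun k : ℕ => ((a + ((r + 1 + (k:ℝ) : ℝ) : ℂ) : ℂ) : RSphere)) atTop
        (𝓝 (OnePoint.infty : RSphere)) := OnePoint.tendsto_coe_infty.comp h1
    apply mem_closure_of_tendsto h2
    filter_upwards with k
    refine ⟨a + ((r + 1 + (k:ℝ) : ℝ) : ℂ), ?_, rfl⟩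
    simp only [mem_compl_iff, mem_closedBall, dist_eq_norm, add_sub_cancel_left, not_le]
    rw [Complex.norm_real, Real.norm_eq_abs, abs_of_pos (by positivity)]
    have : (0:ℝ) ≤ (k:ℝ) := Nat.cast_nonneg k
    linarith
  apply hsconn.subset_closure hsub
  intro x hx
  cases x using OnePoint.rec with
  | infty => exact hinfcl
  | coe u =>
    apply subset_closure
    refine ⟨u, ?_, rfl⟩
    intro hu
    exact hx ⟨u, hu, rfl⟩

lemma compl_circleSet_eq (a : ℂ) (r : ℝ) :
    (circleSet a r)ᶜ = (((↑) : ℂ → RSphere) '' ball a r) ∪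
      ((((↑) : ℂ → RSphere) '' closedBall a r)ᶜ) := by
  rw [circleSet_eq_image]
  ext x
  simp only [mem_compl_iff, mem_union]
  constructor
  · intro hx
    cases x using OnePoint.rec with
    | infty => exact Or.inr (infty_notMem_image _)
    | coe u =>
      by_cases hu : u ∈ closedBall a r
      · rw [← ball_union_sphere] at hu
        rcases hu with h | h
        · exact Or.inl ⟨u, h, rfl⟩
        · exact absurd ⟨u, h, rfl⟩ hx
      · refine Or.inr ?_
        rintro ⟨u', hu', he⟩
        exact hu (OnePoint.coe_injective he ▸ hu')
  · rintro (⟨u, hu, rfl⟩ | h)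
    · rintro ⟨u', hu', he⟩
      have heq : u' = u := OnePoint.coe_injective he
      have h1 : dist u a < r := mem_ball.1 hu
      have h2 : dist u' a = r := mem_sphere.1 hu'
      rw [heq] at h2
      linarith
    · intro hs
      exact h ((image_mono sphere_subset_closedBall) hs)


lemma Ext_circle_cases (z0 : RSphere) (a : ℂ) (r : ℝ) (hr : 0 < r)
    (h0 : z0 ∉ circleSet a r) :
    ((OnePoint.infty : RSphere) ∈ connectedComponentIn (circleSet a r)ᶜ z0 ∧
      connectedComponentIn (circleSet a r)ᶜ z0 = (((↑) : ℂ → RSphere) '' closedBall a r)ᶜ) ∨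
    ((OnePoint.infty : RSphere) ∉ connectedComponentIn (circleSet a r)ᶜ z0 ∧
      connectedComponentIn (circleSet a r)ᶜ z0 = ((↑) : ℂ → RSphere) '' ball a r) := by
  set D : Set RSphere := ((↑) : ℂ → RSphere) '' ball a r with hD
  set O : Set RSphere := ((((↑) : ℂ → RSphere) '' closedBall a r)ᶜ) with hO
  set E : Set RSphere := connectedComponentIn (circleSet a r)ᶜ z0 with hE
  have hDopen : IsOpen D := OnePoint.isOpenEmbedding_coe.isOpenMap _ isOpen_ball
  have hOopen : IsOpen O :=
    isOpen_compl_iff.2 ((isCompact_closedBall a r).image OnePoint.continuous_coe).isClosed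
  have hDO : Disjoint D O := by
    refine Set.disjoint_left.2 ?_
    rintro x ⟨u, hu, rfl⟩ hx
    exact hx ⟨u, ball_subset_closedBall hu, rfl⟩
  have hcompl : (circleSet a r)ᶜ = D ∪ O := compl_circleSet_eq a r
  have hEsub : E ⊆ D ∪ O := by rw [← hcompl]; exact connectedComponentIn_subset _ _
  have hEpre : IsPreconnected E := isPreconnected_connectedComponentIn
  have hz0E : z0 ∈ E := mem_connectedComponentIn h0
  have hDconn : IsConnected D :=
    ⟨⟨(a : RSphere), a, mem_ball_self hr, rfl⟩,
      ((convex_ball a r).isPreconnected).image _ OnePoint.continuous_coe.continuousOn⟩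
  have hOconn : IsConnected O := isConnected_compl_image_closedBall a r hr
  have hDsub : D ⊆ (circleSet a r)ᶜ := by rw [hcompl]; exact subset_union_left
  have hOsub : O ⊆ (circleSet a r)ᶜ := by rw [hcompl]; exact subset_union_right
  have hinfO : (OnePoint.infty : RSphere) ∈ O := infty_notMem_image _
  by_cases hI : (OnePoint.infty : RSphere) ∈ E
  · left
    refine ⟨hI, ?_⟩
    apply Set.Subset.antisymm
    · exact hEpre.subset_left_of_subset_union hOopen hDopen hDO.symm
        (union_comm D O ▸ hEsub) ⟨_, hI, hinfO⟩
    · have h1 : O ⊆ connectedComponentIn (circleSet a r)ᶜ (OnePoint.infty : RSphere) :=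
        hOconn.isPreconnected.subset_connectedComponentIn hinfO hOsub
      rwa [hE, connectedComponentIn_eq hI]
  · right
    refine ⟨hI, ?_⟩
    have hEO : E ∩ O = ∅ := by
      by_contra hne
      have hne' : (E ∩ O).Nonempty := nonempty_iff_ne_empty.2 hne
      have h2 : O ⊆ E := by
        have hz0O : z0 ∈ O := by
          have hEsubO : E ⊆ O := hEpre.subset_left_of_subset_union hOopen hDopen hDO.symm
            (union_comm D O ▸ hEsub) hne'
          exact hEsubO hz0E
        exact hOconn.isPreconnected.subset_connectedComponentIn hz0O hOsub
      exact hI (h2 hinfO)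
    apply Set.Subset.antisymm
    · intro x hx
      rcases hEsub hx with h | h
      · exact h
      · exact absurd (Set.mem_inter hx h) (by rw [hEO]; exact fun h => h)
    · have hz0D : z0 ∈ D := by
        rcases hEsub hz0E with h | h
        · exact h
        · exact absurd (Set.mem_inter hz0E h) (by rw [hEO]; exact fun h => h)
      exact hDconn.isPreconnected.subset_connectedComponentIn hz0D hDsub


lemma line_pair_false {ι : Type} (cfg : AdmissibleConfig ι) {j k : ι ⊕ ι} (hjk : j ≠ k)
    {a b a' b' : ℂ} (hj : cfg.curve j = lineSet a b) (hk : cfg.curve k = lineSet a' b') :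
    False := by
  have h : Disjoint (cfg.curve j) (cfg.curve k) := cfg.disj j k hjk
  have h1 : (OnePoint.infty : RSphere) ∈ cfg.curve j := by
    rw [hj]; exact Set.mem_insert _ _
  have h2 : (OnePoint.infty : RSphere) ∈ cfg.curve k := by
    rw [hk]; exact Set.mem_insert _ _
  exact Set.disjoint_left.1 h h1 h2

lemma plus_mem_circleSet (a : ℂ) (r : ℝ) (hr : 0 < r) :
    ((a + (r : ℂ) : ℂ) : RSphere) ∈ circleSet a r := by
  refine ⟨a + (r : ℂ), rfl, ?_⟩
  rw [add_sub_cancel_left, Complex.norm_real, Real.norm_eq_abs, abs_of_pos hr]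

lemma badcircle_pair_false {ι : Type} (cfg : AdmissibleConfig ι) {j k : ι ⊕ ι} (hjk : j ≠ k)
    {a a' : ℂ} {r r' : ℝ} (hr : 0 < r) (hr' : 0 < r')
    (hj : cfg.curve j = circleSet a r) (hk : cfg.curve k = circleSet a' r')
    (hIj : (OnePoint.infty : RSphere) ∉ cfg.Ext (cfg.curve j))
    (hIk : (OnePoint.infty : RSphere) ∉ cfg.Ext (cfg.curve k)) : False := by
  have h0j : cfg.z0 ∉ circleSet a r := by rw [← hj]; exact cfg.z0_off j
  have h0k : cfg.z0 ∉ circleSet a' r' := by rw [← hk]; exact cfg.z0_off k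
  have hEj : cfg.Ext (cfg.curve j) = ((↑) : ℂ → RSphere) '' ball a r := by
    rcases Ext_circle_cases cfg.z0 a r hr h0j with ⟨hi, -⟩ | ⟨-, he⟩
    · exact absurd (by rw [hj]; exact hi) hIj
    · rw [hj]; exact he
  have hEk : cfg.Ext (cfg.curve k) = ((↑) : ℂ → RSphere) '' ball a' r' := by
    rcases Ext_circle_cases cfg.z0 a' r' hr' h0k with ⟨hi, -⟩ | ⟨-, he⟩
    · exact absurd (by rw [hk]; exact hi) hIk
    · rw [hk]; exact he
  -- each circle is inside the other's disc
  have hsub1 : Metric.sphere a' r' ⊆ ball a r := by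
    intro u hu
    have h1 : (u : RSphere) ∈ cfg.curve k := by
      rw [hk, circleSet_eq_image]; exact ⟨u, hu, rfl⟩
    have h2 : (u : RSphere) ∈ cfg.Ext (cfg.curve j) := cfg.not_separating j k hjk h1
    rw [hEj] at h2
    obtain ⟨u', hu', he⟩ := h2
    rwa [OnePoint.coe_injective he] at hu'
  have hsub2 : Metric.sphere a r ⊆ ball a' r' := by
    intro u hu
    have h1 : (u : RSphere) ∈ cfg.curve j := by
      rw [hj, circleSet_eq_image]; exact ⟨u, hu, rfl⟩
    have h2 : (u : RSphere) ∈ cfg.Ext (cfg.curve k) := cfg.not_separating k j (Ne.symm hjk) h1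
    rw [hEk] at h2
    obtain ⟨u', hu', he⟩ := h2
    rwa [OnePoint.coe_injective he] at hu'
  -- the diametrically opposite points give r' < r and r < r'
  have key : ∀ (b : ℂ) (s : ℝ) (b' : ℂ) (s' : ℝ), 0 < s →
      Metric.sphere b s ⊆ ball b' s' → s < s' := by
    intro b s b' s' hs hsub
    have hp1 : b + (s:ℂ) ∈ Metric.sphere b s := by
      rw [mem_sphere, dist_eq_norm, add_sub_cancel_left, Complex.norm_real,
        Real.norm_eq_abs, abs_of_pos hs]
    have hp2 : b - (s:ℂ) ∈ Metric.sphere b s := by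
      rw [mem_sphere, dist_eq_norm, sub_sub_cancel_left, norm_neg, Complex.norm_real,
        Real.norm_eq_abs, abs_of_pos hs]
    have h1 := mem_ball.1 (hsub hp1)
    have h2 := mem_ball.1 (hsub hp2)
    have h3 : dist (b + (s:ℂ)) (b - (s:ℂ)) = 2 * s := by
      rw [dist_eq_norm]
      have : (b + (s:ℂ)) - (b - (s:ℂ)) = 2 * (s:ℂ) := by ring
      rw [this]
      rw [norm_mul, Complex.norm_ofNat, Complex.norm_real, Real.norm_eq_abs, abs_of_pos hs]
    have h4 := dist_triangle (b + (s:ℂ)) b' (b - (s:ℂ))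
    rw [h3] at h4
    rw [dist_comm b' _] at h4
    linarith
  have k1 : r' < r := key a' r' a r hr' hsub1
  have k2 : r < r' := key a r a' r' hr hsub2
  linarith

lemma R_disjoint_aux {ι : Type} (cfg : AdmissibleConfig ι) {j k : ι ⊕ ι} (hjk : j ≠ k)
    {a' : ℂ} {r' : ℝ} (hr' : 0 < r')
    (hk : cfg.curve k = circleSet a' r')
    (hIk : (OnePoint.infty : RSphere) ∈ cfg.Ext (cfg.curve k)) :
    ∀ z : RSphere, z ∈ (cfg.Ext (cfg.curve j))ᶜ → z ∈ (cfg.Ext (cfg.curve k))ᶜ → False := by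
  have h0k : cfg.z0 ∉ circleSet a' r' := by rw [← hk]; exact cfg.z0_off k
  have hRk : (cfg.Ext (cfg.curve k))ᶜ = ((↑) : ℂ → RSphere) '' closedBall a' r' := by
    rcases Ext_circle_cases cfg.z0 a' r' hr' h0k with ⟨-, he⟩ | ⟨hni, -⟩
    · rw [hk]
      show (connectedComponentIn (circleSet a' r')ᶜ cfg.z0)ᶜ = _
      rw [he, compl_compl]
    · exfalso
      apply hni
      have h := hIk
      rw [hk] at h
      exact h
  -- the closed disc is connected, contained in (curve j)ᶜ, and meets Ext j
  have hcmem : ((a' + (r':ℂ) : ℂ) : RSphere) ∈ cfg.curve k := by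
    rw [hk]; exact plus_mem_circleSet a' r' hr'
  have hcExtj : ((a' + (r':ℂ) : ℂ) : RSphere) ∈ cfg.Ext (cfg.curve j) :=
    cfg.not_separating j k hjk hcmem
  have hcK : ((a' + (r':ℂ) : ℂ) : RSphere) ∈ ((↑) : ℂ → RSphere) '' closedBall a' r' := by
    refine ⟨a' + (r':ℂ), ?_, rfl⟩
    rw [mem_closedBall, dist_eq_norm, add_sub_cancel_left, Complex.norm_real, Real.norm_eq_abs,
      abs_of_pos hr']
  have hKconn : IsPreconnected (((↑) : ℂ → RSphere) '' closedBall a' r') :=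
    ((convex_closedBall a' r').isPreconnected).image _ OnePoint.continuous_coe.continuousOn
  have hKsub : ((↑) : ℂ → RSphere) '' closedBall a' r' ⊆ (cfg.curve j)ᶜ := by
    intro z hz hzj
    have h1 : z ∈ cfg.Ext (cfg.curve k) := cfg.not_separating k j (Ne.symm hjk) hzj
    rw [← hRk] at hz
    exact hz h1
  have hsub : ((↑) : ℂ → RSphere) '' closedBall a' r'
      ⊆ connectedComponentIn (cfg.curve j)ᶜ (((a' + (r':ℂ) : ℂ) : RSphere)) :=
    hKconn.subset_connectedComponentIn hcK hKsub
  have heq : cfg.Ext (cfg.curve j)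
      = connectedComponentIn (cfg.curve j)ᶜ (((a' + (r':ℂ) : ℂ) : RSphere)) :=
    connectedComponentIn_eq hcExtj
  intro z hzj hzk
  rw [hRk] at hzk
  exact hzj (by rw [heq]; exact hsub hzk)

lemma SchottkyData.w_mem_inr {ι : Type} (S : SchottkyData ι) (i : ι) :
    (S.g i) S.cfg.z0 ∈ (S.cfg.Ext (S.cfg.curve (Sum.inr i)))ᶜ := by
  have h1 : S.cfg.z0 ∈ S.cfg.Ext (S.cfg.C i) :=
    mem_connectedComponentIn (S.cfg.z0_off (Sum.inl i))
  have h2 : (S.g i) S.cfg.z0 ∈ S.cfg.Intr (S.cfg.C' i) := by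
    rw [← S.pairing i]; exact Set.mem_image_of_mem _ h1
  exact fun hc => h2.2 hc

lemma SchottkyData.w_mem_inl {ι : Type} (S : SchottkyData ι) (i : ι) :
    (S.g i)⁻¹ S.cfg.z0 ∈ (S.cfg.Ext (S.cfg.curve (Sum.inl i)))ᶜ := by
  intro hc
  have h2 : S.cfg.z0 ∈ S.cfg.Intr (S.cfg.C' i) := by
    rw [← S.pairing i]
    refine ⟨(S.g i)⁻¹ S.cfg.z0, hc, ?_⟩
    exact Equiv.apply_symm_apply _ _
  exact h2.2 (mem_connectedComponentIn (S.cfg.z0_off (Sum.inr i)))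

lemma AdmissibleConfig.accSet_eq_T (cfg : AdmissibleConfig ℕ) :
    cfg.accSet
      = {x : RSphere | ∀ U ∈ 𝓝 x, {k : ℕ ⊕ ℕ | (cfg.curve k ∩ U).Nonempty}.Infinite} := by
  apply Set.Subset.antisymm
  · rintro x ⟨j, p, hinj, hmem, htend⟩ U hU
    have hev : ∀ᶠ n in atTop, p n ∈ U := htend hU
    obtain ⟨N, hN⟩ := eventually_atTop.1 hev
    have hsub : j '' (Set.Ici N) ⊆ {k | (cfg.curve k ∩ U).Nonempty} := by
      rintro - ⟨n, hn, rfl⟩; exact ⟨p n, hmem n, hN n hn⟩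
    exact ((Set.Ici_infinite N).image (hinj.injOn)).mono hsub
  · intro x hx
    obtain ⟨U, hU⟩ := (𝓝 x).exists_antitone_basis
    set E : (ℕ ⊕ ℕ) ≃ ℕ := Denumerable.eqv (ℕ ⊕ ℕ) with hEdef
    have hs : ∀ n : ℕ, {m : ℕ | (cfg.curve (E.symm m) ∩ U n).Nonempty}.Infinite := by
      intro n
      have h1 : {k : ℕ ⊕ ℕ | (cfg.curve k ∩ U n).Nonempty}.Infinite := hx _ (hU.mem n)
      have h2 : {m : ℕ | (cfg.curve (E.symm m) ∩ U n).Nonempty}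
          = E '' {k : ℕ ⊕ ℕ | (cfg.curve k ∩ U n).Nonempty} := by
        ext m
        simp only [Set.mem_image, Set.mem_setOf_eq]
        constructor
        · intro h; exact ⟨E.symm m, h, E.apply_symm_apply m⟩
        · rintro ⟨k, hk, rfl⟩; rw [E.symm_apply_apply]; exact hk
      rw [h2]
      exact h1.image (E.injective.injOn)
    set t : ℕ → ℕ := fun n => Nat.rec ((hs 0).exists_gt 0).choose
      (fun n ih => ((hs (n + 1)).exists_gt ih).choose) n with ht
    have ht0 : t 0 ∈ {m | (cfg.curve (E.symm m) ∩ U 0).Nonempty} :=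
      ((hs 0).exists_gt 0).choose_spec.1
    have hspec : ∀ n : ℕ, t (n + 1) ∈ {m | (cfg.curve (E.symm m) ∩ U (n + 1)).Nonempty}
        ∧ t n < t (n + 1) := fun n => ((hs (n + 1)).exists_gt (t n)).choose_spec
    have hmono : StrictMono t := strictMono_nat_of_lt_succ (fun n => (hspec n).2)
    have htmem : ∀ n, (cfg.curve (E.symm (t n)) ∩ U n).Nonempty := by
      intro n
      cases n with
      | zero => exact ht0
      | succ n => exact (hspec n).1
    choose q hq using htmem
    refine ⟨fun n => E.symm (t n), q, ?_, fun n => (hq n).1, ?_⟩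
    · exact E.symm.injective.comp hmono.injective
    · exact hU.tendsto (fun n => (hq n).2)

lemma isClosed_T (cfg : AdmissibleConfig ℕ) :
    IsClosed {x : RSphere | ∀ U ∈ 𝓝 x, {k : ℕ ⊕ ℕ | (cfg.curve k ∩ U).Nonempty}.Infinite} := by
  rw [← isOpen_compl_iff, isOpen_iff_mem_nhds]
  intro x hx
  simp only [Set.mem_compl_iff, Set.mem_setOf_eq, not_forall] at hx
  obtain ⟨U, hU, hfin⟩ := hx
  have hint : interior U ∈ 𝓝 x := interior_mem_nhds.2 hU
  apply Filter.mem_of_superset hint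
  intro y hy
  simp only [Set.mem_compl_iff, Set.mem_setOf_eq, not_forall]
  exact ⟨U, ⟨Filter.mem_of_superset (isOpen_interior.mem_nhds hy) interior_subset, hfin⟩⟩


end Lemma22Aux

/-- **Lemma 2.2.** For a classical Schottky-like group, the accumulation set `Λ'` of the
configuration circles is a closed subset of the limit set `Λ(G)`. -/
theorem accumulationSet_closed_subset_limitSet (S : SchottkyData ℕ)
    (hdisc : IsDiscreteSubgroup S.G) (hcl : S.IsClassical) :
    IsClosed S.cfg.accSet ∧ S.cfg.accSet ⊆ limitSet S.G := by
  classical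
  constructor
  · rw [S.cfg.accSet_eq_T]
    exact isClosed_T S.cfg
  · rintro x ⟨j, p, hinj, hmem, htend⟩
    set cfg := S.cfg with hcfgdef
    -- all but finitely many curves are circles with `∞` in their exterior
    set good : ℕ ⊕ ℕ → Prop := fun k => ∃ a : ℂ, ∃ r : ℝ, 0 < r ∧
      cfg.curve k = circleSet a r ∧
      (OnePoint.infty : RSphere) ∈ cfg.Ext (cfg.curve k) with hgooddef
    have hbadfin : {k : ℕ ⊕ ℕ | ¬ good k}.Finite := by
      have hsub : {k : ℕ ⊕ ℕ | ¬ good k} ⊆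
          {k : ℕ ⊕ ℕ | ∃ a b : ℂ, a ≠ b ∧ cfg.curve k = lineSet a b} ∪
          {k : ℕ ⊕ ℕ | ∃ a : ℂ, ∃ r : ℝ, 0 < r ∧ cfg.curve k = circleSet a r ∧
            (OnePoint.infty : RSphere) ∉ cfg.Ext (cfg.curve k)} := by
        intro k hk
        rcases hcl k with ⟨a, r, hr, hc⟩ | ⟨a, b, hab, hc⟩
        · right
          refine ⟨a, r, hr, hc, ?_⟩
          intro hi
          exact hk ⟨a, r, hr, hc, hi⟩
        · exact Or.inl ⟨a, b, hab, hc⟩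
      apply Set.Finite.subset (Set.Finite.union ?_ ?_) hsub
      · apply Set.Subsingleton.finite
        rintro k ⟨a, b, hab, hc⟩ k' ⟨a', b', hab', hc'⟩
        by_contra hne
        exact line_pair_false cfg hne hc hc'
      · apply Set.Subsingleton.finite
        rintro k ⟨a, r, hr, hc, hi⟩ k' ⟨a', r', hr', hc', hi'⟩
        by_contra hne
        exact badcircle_pair_false cfg hne hr hr' hc hc' hi hi'
    have hjfin : {n : ℕ | ¬ good (j n)}.Finite :=
      (Set.Finite.preimage (hinj.injOn) hbadfin).subset (fun n h => h)
    obtain ⟨N, hN⟩ := hjfin.bddAbove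
    have hgood' : ∀ n : ℕ, good (j (n + (N + 1))) := by
      intro n
      by_contra h
      have h2 : n + (N + 1) ≤ N := hN h
      omega
    set j' : ℕ → ℕ ⊕ ℕ := fun n => j (n + (N + 1)) with hj'def
    set p' : ℕ → RSphere := fun n => p (n + (N + 1)) with hp'def
    have hinj' : Function.Injective j' := by
      intro n m h
      have := hinj h
      omega
    have htend' : Tendsto p' atTop (𝓝 x) := htend.comp (tendsto_add_atTop_nat (N + 1))
    have hmem' : ∀ n, p' n ∈ cfg.curve (j' n) := fun n => hmem _
    choose a r hr hcur hext using fun n => hgood' n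
    -- the group elements to use
    set e : ℕ → Equiv.Perm RSphere :=
      fun n => Sum.elim (fun i => (S.g i)⁻¹) (fun i => S.g i) (j' n) with hedef
    have heG : ∀ n, e n ∈ S.G := by
      intro n
      have : e n = Sum.elim (fun i => (S.g i)⁻¹) (fun i => S.g i) (j' n) := rfl
      rw [this]
      cases j' n with
      | inl i =>
        exact inv_mem (Subgroup.subset_closure (Set.mem_range_self i))
      | inr i =>
        exact Subgroup.subset_closure (Set.mem_range_self i)
    have hwR : ∀ n, (e n) cfg.z0 ∈ (cfg.Ext (cfg.curve (j' n)))ᶜ := by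
      intro n
      have he' : e n = Sum.elim (fun i => (S.g i)⁻¹) (fun i => S.g i) (j' n) := rfl
      rw [he']
      rcases hj : j' n with i | i
      · exact S.w_mem_inl i
      · exact S.w_mem_inr i
    have hpR : ∀ n, p' n ∈ (cfg.Ext (cfg.curve (j' n)))ᶜ :=
      fun n hE => (connectedComponentIn_subset _ _ hE) (hmem' n)
    have hR : ∀ n, (cfg.Ext (cfg.curve (j' n)))ᶜ
        = ((↑) : ℂ → RSphere) '' Metric.closedBall (a n) (r n) := by
      intro n
      have h0 : cfg.z0 ∉ circleSet (a n) (r n) := by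
        rw [← hcur n]; exact cfg.z0_off (j' n)
      rcases Ext_circle_cases cfg.z0 (a n) (r n) (hr n) h0 with ⟨-, hE⟩ | ⟨hni, -⟩
      · rw [hcur n]
        show (connectedComponentIn (circleSet (a n) (r n))ᶜ cfg.z0)ᶜ = _
        rw [hE, compl_compl]
      · exfalso
        apply hni
        have h2 := hext n
        rw [hcur n] at h2
        exact h2
    have hdisjR : ∀ m n, m ≠ n → ∀ z : RSphere,
        z ∈ (cfg.Ext (cfg.curve (j' m)))ᶜ → z ∈ (cfg.Ext (cfg.curve (j' n)))ᶜ → False := by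
      intro m n hmn z hzm hzn
      exact R_disjoint_aux cfg (hinj'.ne hmn) (hr n) (hcur n) (hext n) z hzm hzn
    set u : ℕ → S.G := fun n => ⟨e n, heG n⟩ with hudef
    have huinj : Function.Injective u := by
      intro m n hmn
      by_contra hne
      have he' : e m = e n := congrArg Subtype.val hmn
      have hz : (e m) cfg.z0 ∈ (cfg.Ext (cfg.curve (j' n)))ᶜ := by
        rw [he']; exact hwR n
      exact hdisjR m n hne _ (hwR m) hz
    -- complex coordinates
    have hwCoord : ∀ n, ∃ w : ℂ, w ∈ Metric.closedBall (a n) (r n)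
        ∧ ((w : RSphere)) = (e n) cfg.z0 := by
      intro n
      have h1 := hwR n
      rw [hR n] at h1
      obtain ⟨w, hw1, hw2⟩ := h1
      exact ⟨w, hw1, hw2⟩
    choose v hvball hvw using hwCoord
    have hpCoord : ∀ n, ∃ c : ℂ, c ∈ Metric.closedBall (a n) (r n)
        ∧ ((c : RSphere)) = p' n := by
      intro n
      have h1 := hpR n
      rw [hR n] at h1
      obtain ⟨c, hc1, hc2⟩ := h1
      exact ⟨c, hc1, hc2⟩
    choose c hcball hcp using hpCoord
    have hballdisj : ∀ m n, m ≠ n → ∀ z : ℂ,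
        z ∈ Metric.closedBall (a m) (r m) → z ∈ Metric.closedBall (a n) (r n) → False := by
      intro m n hmn z h1 h2
      exact hdisjR m n hmn (z : RSphere) (by rw [hR m]; exact ⟨z, h1, rfl⟩)
        (by rw [hR n]; exact ⟨z, h2, rfl⟩)
    have hvc2r : ∀ n, dist (v n) (c n) ≤ 2 * r n := by
      intro n
      have h1 := Metric.mem_closedBall.1 (hvball n)
      have h2 := Metric.mem_closedBall.1 (hcball n)
      have := dist_triangle (v n) (a n) (c n)
      rw [dist_comm (a n) (c n)] at this
      linarith
    refine ⟨cfg.z0, u, huinj, ?_⟩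
    show Tendsto (fun n => (e n) cfg.z0) atTop (𝓝 x)
    have hcongr : ∀ n, ((v n : RSphere)) = (e n) cfg.z0 := hvw
    cases x using OnePoint.rec with
    | coe ξ =>
      have htc : Tendsto c atTop (𝓝 ξ) := by
        rw [OnePoint.isOpenEmbedding_coe.isEmbedding.tendsto_nhds_iff]
        exact htend'.congr (fun n => (hcp n).symm)
      obtain ⟨M, hM⟩ := htc.norm.bddAbove_range
      have hMn : ∀ n, ‖c n‖ ≤ M := fun n => hM ⟨n, rfl⟩
      have hr0 : Tendsto r atTop (𝓝 0) := by
        rw [Metric.tendsto_atTop]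
        intro ε hε
        have hfin := finite_big_balls a r hr hballdisj c hcball ε M hε
        have hfin2 : {n : ℕ | ε ≤ r n}.Finite :=
          hfin.subset (fun n hn => ⟨hn, hMn n⟩)
        obtain ⟨K, hK⟩ := hfin2.bddAbove
        refine ⟨K + 1, fun n hn => ?_⟩
        have hlt : r n < ε := by
          by_contra hge
          push_neg at hge
          have := hK (show n ∈ {n : ℕ | ε ≤ r n} from hge)
          omega
        rw [Real.dist_eq, sub_zero, abs_of_pos (hr n)]
        exact hlt
      have htv : Tendsto v atTop (𝓝 ξ) := by
        rw [tendsto_iff_dist_tendsto_zero]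
        have hb : ∀ n, dist (v n) ξ ≤ 2 * r n + dist (c n) ξ := by
          intro n
          have h1 := dist_triangle (v n) (c n) ξ
          have h2 := hvc2r n
          linarith
        have hlim : Tendsto (fun n => 2 * r n + dist (c n) ξ) atTop (𝓝 0) := by
          have h3 := (hr0.const_mul 2).add (tendsto_iff_dist_tendsto_zero.1 htc)
          simpa using h3
        exact squeeze_zero (fun n => dist_nonneg) hb hlim
      have := (OnePoint.continuous_coe.tendsto ξ).comp htv
      exact this.congr hcongr
    | infty =>
      have htc : Tendsto c atTop (Filter.coclosedCompact ℂ) := by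
        rw [← OnePoint.comap_coe_nhds_infty, tendsto_comap_iff]
        exact htend'.congr (fun n => (hcp n).symm)
      rw [Filter.coclosedCompact_eq_cocompact] at htc
      have hnormc : Tendsto (fun n => ‖c n‖) atTop atTop :=
        tendsto_norm_cocompact_atTop.comp htc
      have hnormv : Tendsto (fun n => ‖v n‖) atTop atTop := by
        rw [tendsto_atTop]
        intro M
        by_contra hcon
        rw [not_eventually] at hcon
        have hA : {n : ℕ | ‖v n‖ ≤ M}.Infinite := by
          apply Set.Infinite.mono ?_ (Nat.frequently_atTop_iff_infinite.1 hcon)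
          intro n hn
          simp only [Set.mem_setOf_eq, not_le] at hn
          exact le_of_lt hn
        have hsubA : {n : ℕ | ‖v n‖ ≤ M} ⊆
            {n : ℕ | 1 ≤ r n ∧ ‖v n‖ ≤ M} ∪ {n : ℕ | ‖c n‖ ≤ M + 2} := by
          intro n hn
          by_cases h1 : 1 ≤ r n
          · exact Or.inl ⟨h1, hn⟩
          · push_neg at h1
            right
            have h2 : ‖c n‖ ≤ ‖v n‖ + dist (v n) (c n) := by
              have he : ‖c n‖ = ‖v n + (c n - v n)‖ := by ring_nf
              rw [he, dist_eq_norm']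
              exact norm_add_le _ _
            have h3 : dist (v n) (c n) ≤ 2 * r n := hvc2r n
            have hn' : ‖v n‖ ≤ M := hn
            simp only [Set.mem_setOf_eq]
            linarith
        have hfin1 := finite_big_balls a r hr hballdisj v hvball 1 M one_pos
        have hfin2 : {n : ℕ | ‖c n‖ ≤ M + 2}.Finite := by
          have hev := hnormc.eventually_gt_atTop (M + 2)
          obtain ⟨K, hK⟩ := eventually_atTop.1 hev
          apply Set.Finite.subset (Set.finite_Iio K)
          intro n hn
          simp only [Set.mem_setOf_eq] at hn
          by_contra h
          simp only [Set.mem_Iio, not_lt] at h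
          exact absurd hn (not_le.2 (hK n h))
        exact hA ((hfin1.union hfin2).subset hsubA)
      have hvc : Tendsto v atTop (Filter.cocompact ℂ) := by
        apply tendsto_cocompact_of_tendsto_dist_comp_atTop (0 : ℂ)
        simpa only [dist_zero_right] using hnormv
      rw [← Filter.coclosedCompact_eq_cocompact] at hvc
      exact (OnePoint.tendsto_coe_infty.comp hvc).congr hcongr

end SchottkyPaper
end
end

section
/- Let A₁ ⊂ ℂ be a round annulus whose core circle C₁ has radius r₁ > 0 and A₂ ⊂ ℂ a round annulus whose core circle C₂ has radius r₂ > 0. Suppose there are positive constants m, M > 0 such that m ≤ mod(A₁) and mod(A₂) ≤ M. Then any conformal map f of A₁ into A₂ (injective holomorphic f : A₁ → A₂) with f(C₁) = C₂ satisfies |f′(z)| ≤ (4M/m)·(r₂/r₁) for every z ∈ C₁. (Proposition 6.4) -/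
open Filter Topology Set

noncomputable section

namespace SchottkyPaper

section AuxProp64

open Metric Complex intervalIntegral

lemma exists_primitive {g : ℂ → ℂ} (hg : DifferentiableOn ℂ g (Metric.ball (0:ℂ) 1)) :
    ∃ H : ℂ → ℂ, ∀ w ∈ Metric.ball (0:ℂ) 1, HasDerivAt H (g w) w := by
  have hball : IsOpen (Metric.ball (0:ℂ) 1) := Metric.isOpen_ball
  have han : AnalyticOnNhd ℂ g (Metric.ball 0 1) := hg.analyticOnNhd hball
  have hg' : DifferentiableOn ℂ (deriv g) (Metric.ball 0 1) := han.deriv.differentiableOn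
  have hgc : ContinuousOn g (Metric.ball 0 1) := hg.continuousOn
  have hg'c : ContinuousOn (deriv g) (Metric.ball 0 1) := hg'.continuousOn
  refine ⟨fun w => ∫ t in (0:ℝ)..1, w * g ((t:ℂ) * w), ?_⟩
  intro w₀ hw₀
  obtain ⟨r, hr1, hr2⟩ := exists_between (mem_ball_zero_iff.1 hw₀)
  have hrpos : 0 < r := lt_of_le_of_lt (norm_nonneg _) hr1
  have hsub : Metric.closedBall (0:ℂ) r ⊆ Metric.ball 0 1 := fun x hx =>
    mem_ball_zero_iff.2 (lt_of_le_of_lt (mem_closedBall_zero_iff.1 hx) hr2)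
  -- bounds
  obtain ⟨C₁, hC₁⟩ := (isCompact_closedBall (0:ℂ) r).exists_bound_of_continuousOn
    (hgc.mono hsub)
  obtain ⟨C₂, hC₂⟩ := (isCompact_closedBall (0:ℂ) r).exists_bound_of_continuousOn
    (hg'c.mono hsub)
  set ε : ℝ := r - ‖w₀‖ with hε
  have hεpos : 0 < ε := sub_pos.2 hr1
  have hxmem : ∀ x ∈ Metric.ball w₀ ε, ∀ t : ℝ, |t| ≤ 1 → (t:ℂ) * x ∈ Metric.closedBall (0:ℂ) r := by
    intro x hx t ht
    have hxr : ‖x‖ < r := by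
      calc ‖x‖ ≤ ‖x - w₀‖ + ‖w₀‖ := by simpa using norm_add_le (x - w₀) w₀
      _ < ε + ‖w₀‖ := by
          have := mem_ball_iff_norm.1 hx; linarith
      _ = r := by simp [hε]
    have : ‖(t:ℂ) * x‖ = |t| * ‖x‖ := by
      simp [norm_mul, Complex.norm_real]
    rw [mem_closedBall_zero_iff, this]
    nlinarith [norm_nonneg x]
  set F' : ℂ → ℝ → ℂ := fun x t => g ((t:ℂ)*x) + x * (deriv g ((t:ℂ)*x) * (t:ℂ)) with hF'
  have hW₀ : w₀ ∈ Metric.ball w₀ ε := mem_ball_self hεpos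
  -- measurability etc
  have hcont : ∀ x ∈ Metric.ball w₀ ε, ContinuousOn (fun t : ℝ => x * g ((t:ℂ) * x)) (Set.uIcc (0:ℝ) 1) := by
    intro x hx
    refine ContinuousOn.mul continuousOn_const ?_
    refine hgc.comp (Complex.continuous_ofReal.mul continuous_const).continuousOn ?_
    intro t ht
    apply hsub
    apply hxmem x hx
    rw [Set.uIcc_of_le (by norm_num : (0:ℝ) ≤ 1)] at ht
    rw [abs_le]; constructor <;> [linarith [ht.1]; linarith [ht.2]]
  have huIoc : ∀ t ∈ Set.uIoc (0:ℝ) 1, |t| ≤ 1 := by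
    intro t ht
    rw [Set.uIoc_of_le (by norm_num : (0:ℝ) ≤ 1)] at ht
    rw [abs_le]; constructor <;> [linarith [ht.1.le]; linarith [ht.2]]
  have hF_meas : ∀ᶠ x in nhds w₀, MeasureTheory.AEStronglyMeasurable (fun t : ℝ => x * g ((t:ℂ)*x))
      ((MeasureTheory.volume : MeasureTheory.Measure ℝ).restrict (Set.uIoc (0:ℝ) 1)) := by
    filter_upwards [Metric.ball_mem_nhds w₀ hεpos] with x hx
    exact ((hcont x hx).mono (by rw [Set.uIoc_of_le (by norm_num : (0:ℝ) ≤ 1), Set.uIcc_of_le (by norm_num : (0:ℝ) ≤ 1)]; exact Set.Ioc_subset_Icc_self)).aestronglyMeasurable measurableSet_uIoc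
  have hF_int : IntervalIntegrable (fun t : ℝ => w₀ * g ((t:ℂ)*w₀)) MeasureTheory.volume 0 1 :=
    (hcont w₀ hW₀).intervalIntegrable
  have hF'cont : ContinuousOn (F' w₀) (Set.uIcc (0:ℝ) 1) := by
    have hmapsto : ∀ t ∈ Set.uIcc (0:ℝ) 1, (t:ℂ) * w₀ ∈ Metric.ball (0:ℂ) 1 := by
      intro t ht
      apply hsub; apply hxmem w₀ hW₀
      rw [Set.uIcc_of_le (by norm_num : (0:ℝ) ≤ 1)] at ht
      rw [abs_le]; constructor <;> [linarith [ht.1]; linarith [ht.2]]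
    apply ContinuousOn.add
    · exact hgc.comp (Complex.continuous_ofReal.mul continuous_const).continuousOn hmapsto
    · exact continuousOn_const.mul ((hg'c.comp (Complex.continuous_ofReal.mul continuous_const).continuousOn hmapsto).mul
        Complex.continuous_ofReal.continuousOn)
  have hF'_meas : MeasureTheory.AEStronglyMeasurable (F' w₀)
      ((MeasureTheory.volume : MeasureTheory.Measure ℝ).restrict (Set.uIoc (0:ℝ) 1)) :=
    (hF'cont.mono (by rw [Set.uIoc_of_le (by norm_num : (0:ℝ) ≤ 1), Set.uIcc_of_le (by norm_num : (0:ℝ) ≤ 1)]; exact Set.Ioc_subset_Icc_self)).aestronglyMeasurable measurableSet_uIoc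
  have h_bound : ∀ᵐ t ∂((MeasureTheory.volume : MeasureTheory.Measure ℝ)), t ∈ Set.uIoc (0:ℝ) 1 →
      ∀ x ∈ Metric.ball w₀ ε, ‖F' x t‖ ≤ C₁ + 1 * C₂ * 1 := by
    refine MeasureTheory.ae_of_all _ (fun t ht x hx => ?_)
    have htx := hxmem x hx t (huIoc t ht)
    have h1 : ‖g ((t:ℂ)*x)‖ ≤ C₁ := hC₁ _ htx
    have h2 : ‖deriv g ((t:ℂ)*x)‖ ≤ C₂ := hC₂ _ htx
    have hx1 : ‖x‖ ≤ 1 := by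
      have : ‖x‖ ≤ r := by
        have := hxmem x hx 1 (by norm_num)
        simpa using mem_closedBall_zero_iff.1 this
      linarith
    calc ‖F' x t‖ ≤ ‖g ((t:ℂ)*x)‖ + ‖x * (deriv g ((t:ℂ)*x) * (t:ℂ))‖ := norm_add_le _ _
    _ ≤ C₁ + 1 * C₂ * 1 := by
        have : ‖x * (deriv g ((t:ℂ)*x) * (t:ℂ))‖ = ‖x‖ * (‖deriv g ((t:ℂ)*x)‖ * |t|) := by
          simp [norm_mul, Complex.norm_real]
        rw [this]
        have h3 := huIoc t ht
        have hdt : ‖deriv g ((t:ℂ)*x)‖ * |t| ≤ C₂ * 1 :=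
          mul_le_mul h2 h3 (abs_nonneg t) (le_trans (norm_nonneg _) h2)
        have hC₂0 : (0:ℝ) ≤ C₂ := le_trans (norm_nonneg _) h2
        have hxt : ‖x‖ * (‖deriv g ((t:ℂ)*x)‖ * |t|) ≤ 1 * (C₂ * 1) :=
          mul_le_mul hx1 hdt (mul_nonneg (norm_nonneg _) (abs_nonneg t)) zero_le_one
        nlinarith [hxt, h1]
  have h_diff : ∀ᵐ t ∂((MeasureTheory.volume : MeasureTheory.Measure ℝ)), t ∈ Set.uIoc (0:ℝ) 1 →
      ∀ x ∈ Metric.ball w₀ ε, HasDerivAt (fun x => x * g ((t:ℂ)*x)) (F' x t) x := by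
    refine MeasureTheory.ae_of_all _ (fun t ht x hx => ?_)
    have htx : (t:ℂ)*x ∈ Metric.ball (0:ℂ) 1 := hsub (hxmem x hx t (huIoc t ht))
    have h1 : HasDerivAt (fun y : ℂ => (t:ℂ)*y) (t:ℂ) x := by
      simpa using (hasDerivAt_id x).const_mul (t:ℂ)
    have h2 : HasDerivAt g (deriv g ((t:ℂ)*x)) ((t:ℂ)*x) :=
      (hg.differentiableAt (hball.mem_nhds htx)).hasDerivAt
    have h3 : HasDerivAt (fun y : ℂ => g ((t:ℂ)*y)) (deriv g ((t:ℂ)*x) * (t:ℂ)) x := h2.comp x h1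
    have h4 := (hasDerivAt_id x).mul h3
    exact h4.congr_deriv (by simp [hF'])
  obtain ⟨hFi, hH⟩ := intervalIntegral.hasDerivAt_integral_of_dominated_loc_of_deriv_le (Metric.ball_mem_nhds w₀ hεpos)
    hF_meas hF_int hF'_meas h_bound (by apply _root_.intervalIntegrable_const) h_diff
  -- FTC
  have hFTC : (∫ t in (0:ℝ)..1, F' w₀ t) = g w₀ := by
    have hψ : ∀ t ∈ Set.uIcc (0:ℝ) 1, HasDerivAt (fun s : ℝ => (s:ℂ) * g ((s:ℂ)*w₀)) (F' w₀ t) t := by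
      intro t ht
      rw [Set.uIcc_of_le (by norm_num : (0:ℝ) ≤ 1)] at ht
      have htx : (t:ℂ)*w₀ ∈ Metric.ball (0:ℂ) 1 := hsub (hxmem w₀ hW₀ t (by rw [abs_le]; exact ⟨by linarith [ht.1], ht.2⟩))
      have h2 : HasDerivAt g (deriv g ((t:ℂ)*w₀)) ((t:ℂ)*w₀) :=
        (hg.differentiableAt (hball.mem_nhds htx)).hasDerivAt
      have h1 : HasDerivAt (fun z : ℂ => z * w₀) w₀ (t:ℂ) := by
        simpa using (hasDerivAt_id (t:ℂ)).mul_const w₀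
      have h3 : HasDerivAt (fun z : ℂ => g (z*w₀)) (deriv g ((t:ℂ)*w₀) * w₀) (t:ℂ) := h2.comp (t:ℂ) h1
      have h4 := ((hasDerivAt_id (t:ℂ)).mul h3).comp_ofReal
      simp only [id_eq] at h4
      have heq : (1 : ℂ) * g ((t:ℂ)*w₀) + (t:ℂ) * (deriv g ((t:ℂ)*w₀) * w₀) = F' w₀ t := by
        rw [hF']; ring
      rw [← heq]
      exact h4
    have := intervalIntegral.integral_eq_sub_of_hasDerivAt hψ hFi
    simpa using this
  rwa [hFTC] at hH

lemma exists_log {F : ℂ → ℂ} (hF : DifferentiableOn ℂ F (Metric.ball (0:ℂ) 1))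
    (hne : ∀ w ∈ Metric.ball (0:ℂ) 1, F w ≠ 0) :
    ∃ H : ℂ → ℂ, (∀ w ∈ Metric.ball (0:ℂ) 1, HasDerivAt H (deriv F w / F w) w) ∧
      (∀ w ∈ Metric.ball (0:ℂ) 1, Complex.exp (H w) = F w) := by
  have hball : IsOpen (Metric.ball (0:ℂ) 1) := Metric.isOpen_ball
  have hF' : DifferentiableOn ℂ (deriv F) (Metric.ball 0 1) :=
    ((hF.analyticOnNhd hball).deriv).differentiableOn
  have hgd : DifferentiableOn ℂ (fun w => deriv F w / F w) (Metric.ball 0 1) :=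
    hF'.div hF hne
  obtain ⟨H₀, hH₀⟩ := exists_primitive hgd
  set H : ℂ → ℂ := fun w => H₀ w - H₀ 0 + Complex.log (F 0) with hH
  have h0mem : (0:ℂ) ∈ Metric.ball (0:ℂ) 1 := by simp
  have hHd : ∀ w ∈ Metric.ball (0:ℂ) 1, HasDerivAt H (deriv F w / F w) w := by
    intro w hw
    exact ((hH₀ w hw).sub_const (H₀ 0)).add_const _
  refine ⟨H, hHd, ?_⟩
  -- φ = F * exp (-H) is constant
  set φ : ℂ → ℂ := fun w => F w * Complex.exp (-H w) with hφ
  have hφd : ∀ w ∈ Metric.ball (0:ℂ) 1, HasDerivAt φ 0 w := by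
    intro w hw
    have h1 : HasDerivAt F (deriv F w) w := (hF.differentiableAt (hball.mem_nhds hw)).hasDerivAt
    have h2 : HasDerivAt (fun y => -H y) (-(deriv F w / F w)) w := (hHd w hw).neg
    have h3 : HasDerivAt (fun y => Complex.exp (-H y))
        (Complex.exp (-H w) * (-(deriv F w / F w))) w := by
      simpa [mul_comm, Function.comp_def] using (Complex.hasDerivAt_exp (-H w)).comp w h2
    have h4 := h1.mul h3
    have : deriv F w * Complex.exp (-H w) +
        F w * (Complex.exp (-H w) * -(deriv F w / F w)) = 0 := by
      field_simp [hne w hw]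
      ring
    rwa [this] at h4
  have hconst : ∀ w ∈ Metric.ball (0:ℂ) 1, φ w = φ 0 := by
    intro w hw
    have hdiff : DifferentiableOn ℂ φ (Metric.ball (0:ℂ) 1) := fun y hy =>
      ((hφd y hy).differentiableAt).differentiableWithinAt
    have hzero : ∀ y ∈ Metric.ball (0:ℂ) 1, ‖fderivWithin ℂ φ (Metric.ball (0:ℂ) 1) y‖ ≤ 0 := by
      intro y hy
      rw [fderivWithin_of_isOpen hball hy]
      have h5 : HasFDerivAt φ (0 : ℂ →L[ℂ] ℂ) y := by
        simpa using (hφd y hy).hasFDerivAt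
      simp [h5.fderiv]
    have := Convex.norm_image_sub_le_of_norm_fderivWithin_le hdiff hzero
      (convex_ball (0:ℂ) 1) h0mem hw
    simp only [zero_mul] at this
    have h6 : φ w - φ 0 = 0 := by
      have := norm_le_zero_iff.1 this
      exact this
    linear_combination h6
  intro w hw
  have hφ0 : φ 0 = 1 := by
    have hH0 : H 0 = Complex.log (F 0) := by simp [hH]
    show F 0 * Complex.exp (-H 0) = 1
    rw [hH0, Complex.exp_neg, Complex.exp_log (hne 0 h0mem)]
    exact mul_inv_cancel₀ (hne 0 h0mem)
  have h7 := hconst w hw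
  rw [hφ0] at h7
  simp only [hφ] at h7
  have h8 : Complex.exp (-H w) * Complex.exp (H w) = 1 := by
    rw [← Complex.exp_add]; simp
  calc Complex.exp (H w) = (F w * Complex.exp (-H w)) * Complex.exp (H w) := by rw [h7]; ring
  _ = F w * (Complex.exp (-H w) * Complex.exp (H w)) := by ring
  _ = F w := by rw [h8]; ring

lemma halfplane_schwarz {K : ℂ → ℂ} (hK : DifferentiableOn ℂ K (Metric.ball (0:ℂ) 1))
    (hre : ∀ w ∈ Metric.ball (0:ℂ) 1, 0 < (K w).re) :
    ‖deriv K 0‖ ≤ 2 * (K 0).re := by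
  have h0mem : (0:ℂ) ∈ Metric.ball (0:ℂ) 1 := by simp
  set k : ℂ := K 0 with hk
  have hkre : 0 < k.re := hre 0 h0mem
  have hden : ∀ w ∈ Metric.ball (0:ℂ) 1, K w + (starRingEnd ℂ) k ≠ 0 := by
    intro w hw h
    have : (K w + (starRingEnd ℂ) k).re = (K w).re + k.re := by
      simp [Complex.add_re, Complex.conj_re]
    rw [h] at this
    simp at this
    have := hre w hw
    linarith
  set L : ℂ → ℂ := fun w => (K w - k) / (K w + (starRingEnd ℂ) k) with hL
  have hLd : DifferentiableOn ℂ L (Metric.ball (0:ℂ) 1) :=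
    (hK.sub_const k).div (hK.add_const _) hden
  have hL0 : L 0 = 0 := by simp [hL, ← hk]
  have hmaps : Set.MapsTo L (Metric.ball (0:ℂ) 1) (Metric.ball (L 0) 1) := by
    intro w hw
    rw [hL0, mem_ball_zero_iff]
    have hnum : Complex.normSq (K w - k) < Complex.normSq (K w + (starRingEnd ℂ) k) := by
      have h1 := hre w hw
      simp only [Complex.normSq_apply, Complex.sub_re, Complex.sub_im, Complex.add_re,
        Complex.add_im, Complex.conj_re, Complex.conj_im]
      nlinarith [h1, hkre]
    have habs : ‖K w - k‖ < ‖K w + (starRingEnd ℂ) k‖ := by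
      rw [Complex.norm_def, Complex.norm_def]
      exact Real.sqrt_lt_sqrt (Complex.normSq_nonneg _) hnum
    have habs' : ‖K w - k‖ < ‖K w + (starRingEnd ℂ) k‖ := habs
    rw [norm_div]
    rw [div_lt_one (lt_of_le_of_lt (norm_nonneg (K w - k)) habs')]
    exact habs'
  have hschwarz := Complex.norm_deriv_le_div_of_mapsTo_ball hLd (hmaps.mono_right Metric.ball_subset_closedBall) one_pos
  rw [div_one] at hschwarz
  -- compute deriv L 0
  have hKd : HasDerivAt K (deriv K 0) 0 :=
    (hK.differentiableAt (Metric.isOpen_ball.mem_nhds h0mem)).hasDerivAt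
  have hderivL : HasDerivAt L
      ((deriv K 0 * (k + (starRingEnd ℂ) k) - (k - k) * deriv K 0) / (k + (starRingEnd ℂ) k) ^ 2) 0 := by
    exact (hKd.sub_const k).div (hKd.add_const _) (hden 0 h0mem)
  have hD : k + (starRingEnd ℂ) k = ((2 * k.re : ℝ) : ℂ) := Complex.add_conj k
  have hDne : k + (starRingEnd ℂ) k ≠ 0 := hden 0 h0mem
  have hLval : deriv L 0 = deriv K 0 / (k + (starRingEnd ℂ) k) := by
    rw [hderivL.deriv]
    field_simp
    ring
  rw [hLval] at hschwarz
  rw [norm_div] at hschwarz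
  have habsD : ‖k + (starRingEnd ℂ) k‖ = 2 * k.re := by
    rw [hD, Complex.norm_real, Real.norm_eq_abs]
    rw [abs_of_pos (by linarith)]
  rw [habsD] at hschwarz
  rw [div_le_one (by linarith)] at hschwarz
  linarith [hschwarz]

lemma exterior_schwarz {F : ℂ → ℂ} {a : ℂ} {s : ℝ} (hs : 0 < s)
    (hF : DifferentiableOn ℂ F (Metric.ball (0:ℂ) 1))
    (hmaps : ∀ w ∈ Metric.ball (0:ℂ) 1, s < ‖F w - a‖) :
    ‖deriv F 0‖ ≤
      2 * ‖F 0 - a‖ * Real.log (‖F 0 - a‖ / s) := by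
  have h0mem : (0:ℂ) ∈ Metric.ball (0:ℂ) 1 := by simp
  set F₁ : ℂ → ℂ := fun w => F w - a with hF₁
  have hF₁d : DifferentiableOn ℂ F₁ (Metric.ball (0:ℂ) 1) := hF.sub_const a
  have hne : ∀ w ∈ Metric.ball (0:ℂ) 1, F₁ w ≠ 0 := by
    intro w hw h
    have := hmaps w hw
    rw [show F w - a = F₁ w from rfl, h] at this
    simp at this
    linarith
  obtain ⟨H, hHd, hHexp⟩ := exists_log hF₁d hne
  have hHre : ∀ w ∈ Metric.ball (0:ℂ) 1, (H w).re = Real.log (‖F₁ w‖) := by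
    intro w hw
    have h1 : ‖Complex.exp (H w)‖ = ‖F₁ w‖ := by rw [hHexp w hw]
    rw [Complex.norm_exp] at h1
    rw [← h1, Real.log_exp]
  set K : ℂ → ℂ := fun w => H w - (Real.log s : ℂ) with hK
  have hKd : DifferentiableOn ℂ K (Metric.ball (0:ℂ) 1) := by
    intro w hw
    exact (((hHd w hw).differentiableAt).sub_const _).differentiableWithinAt
  have hKre : ∀ w ∈ Metric.ball (0:ℂ) 1, 0 < (K w).re := by
    intro w hw
    have h1 : (K w).re = (H w).re - Real.log s := by
      simp [hK, Complex.sub_re, Complex.ofReal_re]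
    rw [h1, hHre w hw]
    have := Real.log_lt_log hs (hmaps w hw)
    linarith
  have hbound := halfplane_schwarz hKd hKre
  have hderivK : deriv K 0 = deriv F 0 / F₁ 0 := by
    have h1 : HasDerivAt K (deriv F₁ 0 / F₁ 0) 0 := (hHd 0 h0mem).sub_const _
    rw [h1.deriv]
    congr 1
    have h2 : HasDerivAt F₁ (deriv F 0) 0 := by
      exact ((hF.differentiableAt (Metric.isOpen_ball.mem_nhds h0mem)).hasDerivAt).sub_const a
    rw [h2.deriv]
  have hK0re : (K 0).re = Real.log (‖F₁ 0‖ / s) := by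
    have h1 : (K 0).re = (H 0).re - Real.log s := by
      simp [hK, Complex.sub_re, Complex.ofReal_re]
    have h0 : (0:ℝ) < ‖F₁ 0‖ := lt_trans hs (hmaps 0 h0mem)
    rw [h1, hHre 0 h0mem, Real.log_div (ne_of_gt h0) (ne_of_gt hs)]
  rw [hderivK, hK0re, norm_div] at hbound
  have h0 : (0:ℝ) < ‖F₁ 0‖ := lt_trans hs (hmaps 0 h0mem)
  rw [div_le_iff₀ h0] at hbound
  calc ‖deriv F 0‖ ≤ 2 * Real.log (‖F₁ 0‖ / s) * ‖F₁ 0‖ :=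
    hbound
  _ = 2 * ‖F 0 - a‖ * Real.log (‖F 0 - a‖ / s) := by
    rw [show F₁ 0 = F 0 - a from rfl]; ring

lemma sqrt_exp_ids {s t : ℝ} (hs : 0 < s) (hst : s < t) :
    Real.sqrt (s*t) * Real.exp (Real.log (t/s)/2) = t ∧
    Real.sqrt (s*t) * Real.exp (-(Real.log (t/s)/2)) = s := by
  have ht : 0 < t := lt_trans hs hst
  have hts : 0 < t/s := div_pos ht hs
  have he : Real.exp (Real.log (t/s)/2) = Real.sqrt (t/s) := by
    rw [← Real.log_sqrt hts.le, Real.exp_log (Real.sqrt_pos.2 hts)]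
  constructor
  · rw [he, ← Real.sqrt_mul (by positivity)]
    rw [show s*t*(t/s) = t^2 by field_simp]
    exact Real.sqrt_sq ht.le
  · rw [Real.exp_neg, he, ← div_eq_mul_inv,
      div_eq_iff (ne_of_gt (Real.sqrt_pos.2 hts))]
    rw [show s*t = s^2*(t/s) by field_simp, Real.sqrt_mul (by positivity), Real.sqrt_sq hs.le]

lemma isOpen_planeAnnulus' {a : ℂ} {r R : ℝ} : IsOpen (planeAnnulus a r R) := by
  have h : planeAnnulus a r R = (fun z => ‖z - a‖) ⁻¹' (Set.Ioo r R) := by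
    ext w; simp [planeAnnulus, Set.mem_Ioo]
  rw [h]
  exact (continuous_norm.comp (continuous_id.sub continuous_const)).isOpen_preimage
    _ isOpen_Ioo

end AuxProp64

set_option maxHeartbeats 1000000

/-- **Proposition 6.4.** Let `A₁`, `A₂` be round annuli with core circles of radii
`r₁ = √(s₁ t₁)` and `r₂ = √(s₂ t₂)`, with `m ≤ mod A₁` and `mod A₂ ≤ M`.  Any conformal map
`f` of `A₁` into `A₂` carrying the core circle to the core circle satisfies
`|f'(z)| ≤ (4M/m)(r₂/r₁)` on the core circle of `A₁`. -/
theorem conformal_annulus_derivative_bound (a₁ a₂ : ℂ) (s₁ t₁ s₂ t₂ m M : ℝ)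
    (hs₁ : 0 < s₁) (h₁ : s₁ < t₁) (hs₂ : 0 < s₂) (h₂ : s₂ < t₂)
    (hm : 0 < m) (hM : 0 < M)
    (hmod1 : m ≤ Real.log (t₁ / s₁)) (hmod2 : Real.log (t₂ / s₂) ≤ M)
    (f : ℂ → ℂ)
    (hf : DifferentiableOn ℂ f (planeAnnulus a₁ s₁ t₁))
    (hinj : Set.InjOn f (planeAnnulus a₁ s₁ t₁))
    (hmaps : Set.MapsTo f (planeAnnulus a₁ s₁ t₁) (planeAnnulus a₂ s₂ t₂))
    (hcore : f '' {z : ℂ | ‖z - a₁‖ = Real.sqrt (s₁ * t₁)} =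
      {z : ℂ | ‖z - a₂‖ = Real.sqrt (s₂ * t₂)}) :
    ∀ z : ℂ, ‖z - a₁‖ = Real.sqrt (s₁ * t₁) →
      ‖deriv f z‖ ≤ 4 * M / m * (Real.sqrt (s₂ * t₂) / Real.sqrt (s₁ * t₁)) := by
  intro z hz
  set r₁ : ℝ := Real.sqrt (s₁ * t₁) with hr₁def
  set r₂ : ℝ := Real.sqrt (s₂ * t₂) with hr₂def
  set μ₁ : ℝ := Real.log (t₁ / s₁) with hμ₁def
  set μ₂ : ℝ := Real.log (t₂ / s₂) with hμ₂def
  have ht₁ : 0 < t₁ := lt_trans hs₁ h₁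
  have ht₂ : 0 < t₂ := lt_trans hs₂ h₂
  have hr₁ : 0 < r₁ := Real.sqrt_pos.2 (by positivity)
  have hr₂ : 0 < r₂ := Real.sqrt_pos.2 (by positivity)
  have hμ₁ : 0 < μ₁ := Real.log_pos (by rw [lt_div_iff₀ hs₁]; linarith)
  have hμ₂ : 0 < μ₂ := Real.log_pos (by rw [lt_div_iff₀ hs₂]; linarith)
  have hid₁ := sqrt_exp_ids hs₁ h₁
  have hid₂ := sqrt_exp_ids hs₂ h₂
  rw [← hr₁def, ← hμ₁def] at hid₁
  rw [← hr₂def, ← hμ₂def] at hid₂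
  have hπ := Real.pi_pos
  set c : ℝ := μ₁ / Real.pi with hcdef
  have hc : 0 < c := div_pos hμ₁ hπ
  set θ : ℂ := ((c : ℝ) : ℂ) * Complex.I with hθdef
  have hzmem : z ∈ planeAnnulus a₁ s₁ t₁ := by
    constructor
    · rw [hz, ← hid₁.2]
      have hlt : Real.exp (-(μ₁/2)) < 1 := by
        rw [Real.exp_lt_one_iff]; linarith
      calc r₁ * Real.exp (-(μ₁/2)) < r₁ * 1 := mul_lt_mul_of_pos_left hlt hr₁
      _ = r₁ := mul_one r₁
    · rw [hz, ← hid₁.1]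
      have hlt : (1:ℝ) < Real.exp (μ₁/2) := by
        rw [Real.one_lt_exp_iff]; linarith
      calc r₁ = r₁ * 1 := (mul_one r₁).symm
      _ < r₁ * Real.exp (μ₁/2) := mul_lt_mul_of_pos_left hlt hr₁
  have hza : z - a₁ ≠ 0 := by
    intro h
    rw [h] at hz; simp at hz; rw [← hz] at hr₁; exact lt_irrefl 0 hr₁
  set p : ℂ → ℂ := fun w => a₁ + (z - a₁) * Complex.exp (θ * Complex.log ((1 + w)/(1 - w)))
    with hpdef
  -- basic facts for w in the ball
  have hker : ∀ w ∈ Metric.ball (0:ℂ) 1, (1:ℂ) - w ≠ 0 := by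
    intro w hw h
    have hw1 : w = 1 := by linear_combination -h
    rw [hw1, mem_ball_zero_iff] at hw
    simp at hw
  have hqre : ∀ w ∈ Metric.ball (0:ℂ) 1, 0 < (((1 + w)/(1 - w)) : ℂ).re := by
    intro w hw
    have h2 : 0 < Complex.normSq (1 - w) := Complex.normSq_pos.2 (hker w hw)
    have h1 : Complex.normSq w < 1 := by
      rw [← Complex.sq_norm]
      have hlt : ‖w‖ < 1 := by
        exact mem_ball_zero_iff.1 hw
      nlinarith [norm_nonneg w, hlt]
    rw [Complex.div_re, ← add_div]
    apply div_pos _ h2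
    have : (1 + w).re * (1 - w).re + (1 + w).im * (1 - w).im = 1 - Complex.normSq w := by
      simp [Complex.normSq_apply, Complex.add_re, Complex.add_im, Complex.sub_re,
        Complex.sub_im]
      ring
    rw [this]
    linarith
  have hqslit : ∀ w ∈ Metric.ball (0:ℂ) 1, (((1 + w)/(1 - w)) : ℂ) ∈ Complex.slitPlane :=
    fun w hw => Or.inl (hqre w hw)
  have habs_p : ∀ w ∈ Metric.ball (0:ℂ) 1,
      ‖p w - a₁‖ = r₁ * Real.exp (-c * (((1 + w)/(1 - w)) : ℂ).arg) := by
    intro w hw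
    have : p w - a₁ = (z - a₁) * Complex.exp (θ * Complex.log ((1 + w)/(1 - w))) := by
      rw [hpdef]; ring
    rw [this, norm_mul, Complex.norm_exp, hz]
    congr 2
    rw [hθdef]
    simp only [Complex.mul_re, Complex.mul_im, Complex.I_re, Complex.I_im,
      Complex.ofReal_re, Complex.ofReal_im, Complex.log_im, zero_mul, mul_zero,
      mul_one, one_mul, sub_zero, zero_sub, zero_add, add_zero]
    ring
  have harg : ∀ w ∈ Metric.ball (0:ℂ) 1, |(((1 + w)/(1 - w)) : ℂ).arg| < Real.pi / 2 := by
    intro w hw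
    exact Complex.abs_arg_lt_pi_div_two_iff.2 (Or.inl (hqre w hw))
  have hpmem : ∀ w ∈ Metric.ball (0:ℂ) 1, p w ∈ planeAnnulus a₁ s₁ t₁ := by
    intro w hw
    have habs := habs_p w hw
    have hargw := harg w hw
    have hbd : |(-c) * (((1 + w)/(1 - w)) : ℂ).arg| < μ₁ / 2 := by
      rw [abs_mul, abs_neg, abs_of_pos hc]
      calc c * |(((1 + w)/(1 - w)) : ℂ).arg| < c * (Real.pi / 2) := by
            apply mul_lt_mul_of_pos_left hargw hc
      _ = μ₁ / 2 := by rw [hcdef]; field_simp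
    rw [abs_lt] at hbd
    constructor
    · rw [habs, ← hid₁.2]
      have hlt := Real.exp_lt_exp.2 hbd.1
      rw [show -c * (((1 + w)/(1 - w)) : ℂ).arg = -(c * (((1 + w)/(1 - w)) : ℂ).arg) by ring] at *
      exact mul_lt_mul_of_pos_left hlt hr₁
    · rw [habs, ← hid₁.1]
      have hlt := Real.exp_lt_exp.2 hbd.2
      exact mul_lt_mul_of_pos_left hlt hr₁
  have hpdiff : ∀ w ∈ Metric.ball (0:ℂ) 1, DifferentiableAt ℂ p w := by
    intro w hw
    have hqd : DifferentiableAt ℂ (fun w : ℂ => (1 + w)/(1 - w)) w :=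
      DifferentiableAt.div (by fun_prop) (by fun_prop) (hker w hw)
    have hlogd : DifferentiableAt ℂ (fun w : ℂ => Complex.log ((1 + w)/(1 - w))) w :=
      hqd.clog (hqslit w hw)
    exact (((hlogd.const_mul θ).cexp).const_mul (z - a₁)).const_add a₁
  have hp0 : p 0 = z := by
    rw [hpdef]
    norm_num [Complex.log_one]
  have hdp : HasDerivAt p ((z - a₁) * (2 * θ)) 0 := by
    have h1 : HasDerivAt (fun w : ℂ => 1 + w) 1 0 := by
      simpa using (hasDerivAt_id (0:ℂ)).const_add 1
    have h2 : HasDerivAt (fun w : ℂ => 1 - w) (-1) 0 := by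
      simpa using (hasDerivAt_id (0:ℂ)).const_sub 1
    have hq0 : HasDerivAt (fun w : ℂ => (1 + w)/(1 - w)) 2 0 := by
      have h3 := h1.div h2 (by norm_num : (1:ℂ) - 0 ≠ 0)
      norm_num at h3
      exact h3
    have hone : ((1:ℂ) + 0)/(1 - 0) = 1 := by norm_num
    have hlog1 : HasDerivAt Complex.log 1 (((1:ℂ) + 0)/(1 - 0)) := by
      rw [hone]
      simpa using Complex.hasDerivAt_log (Or.inl (by norm_num : (0:ℝ) < (1:ℂ).re))
    have hcomp : HasDerivAt (fun w : ℂ => Complex.log ((1 + w)/(1 - w))) (1 * 2) 0 :=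
      by have := hlog1.comp 0 hq0; exact this
    have hmul : HasDerivAt (fun w : ℂ => θ * Complex.log ((1 + w)/(1 - w))) (θ * (1 * 2)) 0 :=
      hcomp.const_mul θ
    have hexpd : HasDerivAt (fun w : ℂ => Complex.exp (θ * Complex.log ((1 + w)/(1 - w))))
        (Complex.exp (θ * Complex.log (((1:ℂ) + 0)/(1 - 0))) * (θ * (1 * 2))) 0 :=
      (Complex.hasDerivAt_exp _).comp 0 hmul
    have hfinal := (hexpd.const_mul (z - a₁)).const_add a₁
    rw [hpdef]
    refine hfinal.congr_deriv ?_
    rw [hone, Complex.log_one, mul_zero, Complex.exp_zero]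
    ring
  -- F = f ∘ p
  set F : ℂ → ℂ := fun w => f (p w) with hFdef
  have hFd : DifferentiableOn ℂ F (Metric.ball (0:ℂ) 1) := by
    intro w hw
    exact ((hf.differentiableAt (isOpen_planeAnnulus'.mem_nhds (hpmem w hw))).comp w
      (hpdiff w hw)).differentiableWithinAt
  have hFmaps : ∀ w ∈ Metric.ball (0:ℂ) 1, s₂ < ‖F w - a₂‖ := by
    intro w hw
    exact (hmaps (hpmem w hw)).1
  have hext := exterior_schwarz hs₂ hFd hFmaps
  have hF0 : F 0 = f z := by rw [hFdef]; simp only; rw [hp0]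
  have hfz : ‖f z - a₂‖ = r₂ := by
    have : f z ∈ {w : ℂ | ‖w - a₂‖ = r₂} := by
      rw [← hcore]; exact ⟨z, hz, rfl⟩
    exact this
  have hlogr : Real.log (r₂ / s₂) = μ₂ / 2 := by
    have hs₂' : s₂ = r₂ * Real.exp (-(μ₂/2)) := (hid₂.2).symm
    rw [hs₂']
    rw [Real.exp_neg]
    rw [show r₂ / (r₂ * (Real.exp (μ₂/2))⁻¹) = Real.exp (μ₂/2) by
      field_simp]
    exact Real.log_exp _
  have hderivF : deriv F 0 = deriv f z * ((z - a₁) * (2 * θ)) := by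
    have h1 : DifferentiableAt ℂ f (p 0) :=
      hf.differentiableAt (isOpen_planeAnnulus'.mem_nhds (hpmem 0 (by simp)))
    have h2 := deriv_comp (x := 0) h1 hdp.differentiableAt
    rw [hdp.deriv] at h2
    rw [hFdef]
    rw [show (fun w => f (p w)) = f ∘ p from rfl]
    rw [h2, hp0]
  -- assemble
  rw [hF0, hfz, hlogr] at hext
  rw [hderivF, norm_mul] at hext
  have habsθ : ‖(z - a₁) * (2 * θ)‖ = r₁ * (2 * c) := by
    rw [norm_mul, hz, hθdef, norm_mul, norm_mul, Complex.norm_I, Complex.norm_real, Real.norm_eq_abs,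
      abs_of_pos hc]
    norm_num
  rw [habsθ] at hext
  -- now hext : abs (deriv f z) * (r₁ * (2 * c)) ≤ 2 * r₂ * (μ₂ / 2)
  have hstep2 : ‖deriv f z‖ * (r₁ * 2 * μ₁) ≤ r₂ * μ₂ * Real.pi := by
    have h := mul_le_mul_of_nonneg_right hext hπ.le
    have hcπ : c * Real.pi = μ₁ := by
      rw [hcdef]; field_simp
    have heq : ‖deriv f z‖ * (r₁ * (2 * c)) * Real.pi =
        ‖deriv f z‖ * (r₁ * 2 * μ₁) := by
      rw [← hcπ]; ring
    rw [heq] at h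
    calc ‖deriv f z‖ * (r₁ * 2 * μ₁) ≤ 2 * r₂ * (μ₂ / 2) * Real.pi := h
    _ = r₂ * μ₂ * Real.pi := by ring
  have key : μ₂ * Real.pi * m ≤ 8 * M * μ₁ := by
    have k1 : μ₂ * Real.pi ≤ M * 4 :=
      mul_le_mul hmod2 Real.pi_le_four hπ.le (le_trans hμ₂.le hmod2)
    have k2 : μ₂ * Real.pi * m ≤ (M * 4) * μ₁ :=
      mul_le_mul k1 hmod1 hm.le (by positivity)
    nlinarith [k2]
  have hgoal : 4 * M / m * (r₂ / r₁) = (4 * M * r₂) / (m * r₁) := by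
    field_simp
  rw [hgoal, le_div_iff₀ (by positivity : (0:ℝ) < m * r₁)]
  refine le_of_mul_le_mul_right ?_ (by positivity : (0:ℝ) < 2 * μ₁)
  calc ‖deriv f z‖ * (m * r₁) * (2 * μ₁)
      = ‖deriv f z‖ * (r₁ * 2 * μ₁) * m := by ring
  _ ≤ (r₂ * μ₂ * Real.pi) * m := mul_le_mul_of_nonneg_right hstep2 hm.le
  _ ≤ 4 * M * r₂ * (2 * μ₁) := by nlinarith [key, hr₂]


end SchottkyPaper
end
end
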